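/- arXiv:2507.10731 — 9 statements merged into one kernel-verified Lean document; each statement's English description precedes it below -/
import Mathlib

section
/- Let $Q \in \mathbb{R}^{r\times r}$ and let $v_1,\dots,v_r \in \mathbb{R}^r$ be linearly independent vectors such that (1) $\|v_j\|_2 \le m$ for all $j$, (2) $\|Q v_j\|_2 \le q$ for all $j$, and (3) the absolute value of the determinant of the matrix with columns $v_1,\dots,v_r$ is at least $\tau > 0$. Then the spectral norm satisfies $\|Q\|_2 \le r \cdot \frac{\max\{m^r,1\}\cdot r!}{\tau} \cdot q$. -/
/-!
Write `x = ∑ⱼ cⱼ vⱼ` with Cramer's rule, `cⱼ = det V_j(x) / det V`, where `V_j(x)` is `V`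
with its `j`-th column replaced by `x`. Expanding the determinant over the `r!` permutations,
with entries of column `i` bounded by `m` and of column `j` by `‖x‖`, gives
`|det V_j(x)| ≤ r! m^(r-1) ‖x‖ ≤ r! max(m^r, 1) ‖x‖`, so `|cⱼ| ≤ max(m^r, 1) r! ‖x‖ / τ`.
Then `‖Q x‖ ≤ ∑ⱼ |cⱼ| ‖Q vⱼ‖` by the triangle inequality.
-/

open Finset

noncomputable def euclNorm {r : ℕ} (v : Fin r → ℝ) : ℝ := Real.sqrt (∑ i, v i ^ 2)

lemma euclNorm_eq_norm {r : ℕ} (v : Fin r → ℝ) : euclNorm v = ‖WithLp.toLp 2 v‖ := by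
  simp [euclNorm, EuclideanSpace.norm_eq, Real.norm_eq_abs, sq_abs]

lemma euclNorm_nonneg {r : ℕ} (v : Fin r → ℝ) : 0 ≤ euclNorm v := Real.sqrt_nonneg _

lemma abs_le_euclNorm {r : ℕ} (v : Fin r → ℝ) (i : Fin r) : |v i| ≤ euclNorm v := by
  simpa [euclNorm_eq_norm] using PiLp.norm_apply_le (WithLp.toLp 2 v) i

lemma euclNorm_sum_smul_le {r : ℕ} {ι : Type*} [Fintype ι] (c : ι → ℝ) (w : ι → Fin r → ℝ) :
    euclNorm (∑ j, c j • w j) ≤ ∑ j, |c j| * euclNorm (w j) := by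
  simpa [euclNorm_eq_norm, WithLp.toLp_sum, WithLp.toLp_smul, norm_smul] using
    norm_sum_le univ fun j => c j • WithLp.toLp 2 (w j)

lemma Matrix.abs_det_le_factorial_mul_prod {n : Type*} [Fintype n] [DecidableEq n]
    (M : Matrix n n ℝ) (b : n → ℝ) (h : ∀ k i, |M k i| ≤ b i) :
    |M.det| ≤ (Fintype.card n).factorial * ∏ i, b i := by
  rw [Matrix.det_apply']
  calc |∑ σ : Equiv.Perm n, ((Equiv.Perm.sign σ : ℤ) : ℝ) * ∏ i, M (σ i) i|
      ≤ ∑ σ : Equiv.Perm n, |((Equiv.Perm.sign σ : ℤ) : ℝ) * ∏ i, M (σ i) i| :=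
        abs_sum_le_sum_abs _ _
    _ ≤ ∑ _σ : Equiv.Perm n, ∏ i, b i := by
        gcongr with σ
        rw [abs_mul, abs_unit_intCast, one_mul, abs_prod]
        exact prod_le_prod (fun i _ => abs_nonneg _) fun i _ => h _ i
    _ = (Fintype.card n).factorial * ∏ i, b i := by
        simp [Fintype.card_perm]

lemma Matrix.abs_cramer_le {r : ℕ} (V : Matrix (Fin r) (Fin r) ℝ) {m : ℝ}
    (hV : ∀ k i, |V k i| ≤ m) (x : Fin r → ℝ) (j : Fin r) :
    |V.cramer x j| ≤ r.factorial * (euclNorm x * m ^ (r - 1)) := by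
  have hcol : ∀ k i, |V.updateCol j x k i| ≤ Function.update (fun _ => m) j (euclNorm x) i := by
    intro k i
    rcases eq_or_ne i j with rfl | hij
    · simpa using abs_le_euclNorm x k
    · simpa [hij] using hV k i
  calc |V.cramer x j| ≤ r.factorial * ∏ i, Function.update (fun _ => m) j (euclNorm x) i := by
        simpa [Matrix.cramer_apply] using (V.updateCol j x).abs_det_le_factorial_mul_prod _ hcol
    _ = r.factorial * (euclNorm x * m ^ (r - 1)) := by
        rw [prod_update_of_mem (mem_univ j)]
        simp [card_sdiff]

lemma pow_pred_le_max_pow_one {m : ℝ} (hm : 0 ≤ m) (r : ℕ) : m ^ (r - 1) ≤ max (m ^ r) 1 := by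
  rcases le_total 1 m with h1 | h1
  · exact (pow_le_pow_right₀ h1 (Nat.sub_le r 1)).trans (le_max_left _ _)
  · exact (pow_le_one₀ hm h1).trans (le_max_right _ _)

lemma eq_sum_cramer_smul {n : Type*} [Fintype n] [DecidableEq n] (v : n → n → ℝ)
    (hdet : (Matrix.of fun i j => v j i).det ≠ 0) (x : n → ℝ) :
    x = ∑ j, ((Matrix.of fun i j => v j i).det⁻¹ *
      (Matrix.of fun i j => v j i).cramer x j) • v j := by
  set V : Matrix n n ℝ := Matrix.of fun i j => v j i
  have hmul : V.mulVec (V.det⁻¹ • V.cramer x) = x := by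
    rw [Matrix.mulVec_smul, Matrix.mulVec_cramer, smul_smul, inv_mul_cancel₀ hdet, one_smul]
  conv_lhs => rw [← hmul]
  ext i
  simp [V, Matrix.mulVec, dotProduct, Finset.sum_apply, mul_comm]

lemma abs_cramer_coeff_le {r : ℕ} (v : Fin r → Fin r → ℝ) {m τ : ℝ} (hτ : 0 < τ)
    (hm : ∀ j, euclNorm (v j) ≤ m) (hdet : τ ≤ |(Matrix.of fun i j => v j i).det|)
    (x : Fin r → ℝ) (j : Fin r) :
    |(Matrix.of fun i j => v j i).det⁻¹ * (Matrix.of fun i j => v j i).cramer x j| ≤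
      max (m ^ r) 1 * r.factorial / τ * euclNorm x := by
  set V : Matrix (Fin r) (Fin r) ℝ := Matrix.of fun i j => v j i
  have hm0 : 0 ≤ m := (euclNorm_nonneg _).trans (hm j)
  have hV : ∀ k i, |V k i| ≤ m := fun k i => (abs_le_euclNorm (v i) k).trans (hm i)
  calc |V.det⁻¹ * V.cramer x j| = |V.det|⁻¹ * |V.cramer x j| := by rw [abs_mul, abs_inv]
    _ ≤ τ⁻¹ * (r.factorial * (euclNorm x * m ^ (r - 1))) := by
        gcongr
        exact V.abs_cramer_le hV x j
    _ ≤ τ⁻¹ * (r.factorial * (euclNorm x * max (m ^ r) 1)) := by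
        have := euclNorm_nonneg x
        gcongr
        exact pow_pred_le_max_pow_one hm0 r
    _ = max (m ^ r) 1 * r.factorial / τ * euclNorm x := by ring

theorem stmt1_general {r : ℕ} (Q : Matrix (Fin r) (Fin r) ℝ) (v : Fin r → (Fin r → ℝ))
    (m q τ : ℝ) (hτ : 0 < τ)
    (hm : ∀ j, euclNorm (v j) ≤ m)
    (hq : ∀ j, euclNorm (Q.mulVec (v j)) ≤ q)
    (hdet : τ ≤ |(Matrix.of fun i j => v j i).det|) :
    ∀ x : Fin r → ℝ,
      euclNorm (Q.mulVec x) ≤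
        ((r : ℝ) * (max (m ^ r) 1 * (r.factorial : ℝ) / τ) * q) * euclNorm x := by
  intro x
  set V : Matrix (Fin r) (Fin r) ℝ := Matrix.of fun i j => v j i
  have hdet0 : V.det ≠ 0 := abs_pos.mp (hτ.trans_le hdet)
  set c : Fin r → ℝ := fun j => V.det⁻¹ * V.cramer x j
  set B : ℝ := max (m ^ r) 1 * r.factorial / τ * euclNorm x
  have hB : 0 ≤ B := by have := euclNorm_nonneg x; positivity
  calc euclNorm (Q.mulVec x) = euclNorm (∑ j, c j • Q.mulVec (v j)) := by
        conv_lhs => rw [eq_sum_cramer_smul v hdet0 x]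
        simp only [Matrix.mulVec_sum, Matrix.mulVec_smul, c, V]
    _ ≤ ∑ j, |c j| * euclNorm (Q.mulVec (v j)) := euclNorm_sum_smul_le _ _
    _ ≤ ∑ _j : Fin r, B * q := sum_le_sum fun j _ =>
        mul_le_mul (abs_cramer_coeff_le v hτ hm hdet x j) (hq j) (euclNorm_nonneg _) hB
    _ = ((r : ℝ) * (max (m ^ r) 1 * (r.factorial : ℝ) / τ) * q) * euclNorm x := by
        simp only [sum_const, card_univ, Fintype.card_fin, nsmul_eq_mul, B]
        ring

/-- If `v₁, …, v_r` are linearly independent vectors in `ℝ^r` with `‖v_j‖ ≤ m`,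
`‖Q v_j‖ ≤ q`, and the parallelepiped they span has volume (i.e. `|det|`) at
least `τ > 0`, then the spectral norm of `Q` is at most
`r · max{m^r, 1} · r! / τ · q`, i.e. `‖Q x‖ ≤ (r · max{m^r,1} · r!/τ · q) ‖x‖`
for every `x`. -/
theorem stmt1 {r : ℕ} (Q : Matrix (Fin r) (Fin r) ℝ) (v : Fin r → (Fin r → ℝ))
    (m q τ : ℝ) (hτ : 0 < τ)
    (hli : LinearIndependent ℝ v)
    (hm : ∀ j, euclNorm (v j) ≤ m)
    (hq : ∀ j, euclNorm (Q.mulVec (v j)) ≤ q)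
    (hdet : τ ≤ |(Matrix.of fun i j => v j i).det|) :
    ∀ x : Fin r → ℝ,
      euclNorm (Q.mulVec x) ≤
        ((r : ℝ) * (max (m ^ r) 1 * (r.factorial : ℝ) / τ) * q) * euclNorm x :=
  stmt1_general Q v m q τ hτ hm hq hdet
end

section
/- Let $P, Q : \mathbb{Z}_s^n \to G$ be two distinct functions each expressible as a sum of functions depending on at most $d$ coordinates (i.e. $d$-junta-sums), where $G$ is an Abelian group. Then $\Pr_{\mathbf{a} \sim \mathbb{Z}_s^n}[P(\mathbf{a}) \ne Q(\mathbf{a})] \ge 1/s^d$, where $\mathbf{a}$ is uniformly random. -/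
/-!
`P - Q` is a nonzero `d`-junta-sum, and a nonzero `d`-junta-sum `F` in `n` variables has at least
`s ^ (n - d)` nonzeros. This goes by induction on `n`, splitting off the first coordinate. If `F`
does not depend on it, all `s` slices `F (c, ·)` are the same nonzero `d`-junta-sum in `n`
variables. Otherwise two slices differ, and their difference is a nonzero `(d - 1)`-junta-sum,
since the juntas ignoring the first coordinate cancel; its support is covered by the supports of
the two slices.
-/

open Finset

/-- `f` depends only on the coordinates in `I`. -/
def DependsOnlyOn {n : ℕ} {A G : Type*} (f : (Fin n → A) → G) (I : Finset (Fin n)) : Prop :=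
  ∀ x y : Fin n → A, (∀ i ∈ I, x i = y i) → f x = f y

/-- `f` is a sum of functions each depending on at most `d` coordinates
(a `d`-junta-sum). -/
def IsJuntaSum {n : ℕ} {A G : Type*} [AddCommMonoid G] (d : ℕ)
    (f : (Fin n → A) → G) : Prop :=
  ∃ (k : ℕ) (g : Fin k → (Fin n → A) → G) (I : Fin k → Finset (Fin n)),
    (∀ j, (I j).card ≤ d ∧ DependsOnlyOn (g j) (I j)) ∧ ∀ x, f x = ∑ j, g j x

section DependsOnlyOn

variable {n : ℕ} {A G : Type*} {g : (Fin (n + 1) → A) → G} {I : Finset (Fin (n + 1))}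

theorem DependsOnlyOn.comp_cons (hg : DependsOnlyOn g I) (c : A) :
    DependsOnlyOn (fun y => g (Fin.cons c y)) {i | i.succ ∈ I} := by
  intro x y hxy
  refine hg _ _ fun i hi => ?_
  cases i using Fin.cases with
  | zero => rfl
  | succ i => simpa using hxy i (by simpa using hi)

theorem DependsOnlyOn.cons_eq_cons (hg : DependsOnlyOn g I) (h0 : 0 ∉ I) (c c' : A)
    (y : Fin n → A) : g (Fin.cons c y) = g (Fin.cons c' y) := by
  refine hg _ _ fun i hi => ?_
  cases i using Fin.cases with
  | zero => exact absurd hi h0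
  | succ i => simp

end DependsOnlyOn

namespace IsJuntaSum

variable {n m d e : ℕ} {A G : Type*}

section AddCommMonoid

variable [AddCommMonoid G] {F F' : (Fin n → A) → G}

theorem zero : IsJuntaSum d (0 : (Fin n → A) → G) :=
  ⟨0, finZeroElim, finZeroElim, finZeroElim, fun _ => by simp⟩

theorem add (hF : IsJuntaSum d F) (hF' : IsJuntaSum d F') : IsJuntaSum d (F + F') := by
  obtain ⟨k, g, I, hg, hF⟩ := hF
  obtain ⟨k', g', I', hg', hF'⟩ := hF'
  have hgg' : ∀ j, #(Fin.append I I' j) ≤ d ∧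
      DependsOnlyOn (Fin.append g g' j) (Fin.append I I' j) :=
    Fin.addCases (by simpa using hg) (by simpa using hg')
  exact ⟨k + k', Fin.append g g', Fin.append I I', hgg',
    fun x => by simp [Fin.sum_univ_add, hF, hF']⟩

theorem of_dependsOnlyOn {g : (Fin n → A) → G} {I : Finset (Fin n)} (hI : #I ≤ d)
    (hg : DependsOnlyOn g I) : IsJuntaSum d g :=
  ⟨1, fun _ => g, fun _ => I, fun _ => ⟨hI, hg⟩, fun _ => by simp⟩

theorem map {H : Type*} [AddCommMonoid H] (φ : ((Fin n → A) → G) →+ ((Fin m → A) → H))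
    (hφ : ∀ g I, #I ≤ d → DependsOnlyOn g I → IsJuntaSum e (φ g)) (hF : IsJuntaSum d F) :
    IsJuntaSum e (φ F) := by
  obtain ⟨k, g, I, hg, hF⟩ := hF
  rw [show F = ∑ j, g j from funext fun x => by simp [hF], map_sum]
  exact Finset.sum_induction _ (IsJuntaSum e) (fun _ _ => add) zero
    fun j _ => hφ _ _ (hg j).1 (hg j).2

theorem apply_eq_of_zero_degree (hF : IsJuntaSum 0 F) (x y : Fin n → A) : F x = F y := by
  obtain ⟨k, g, I, hg, hF⟩ := hF
  rw [hF, hF]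
  refine Finset.sum_congr rfl fun j _ => (hg j).2 x y fun i hi => ?_
  simp [card_eq_zero.mp (Nat.le_zero.mp (hg j).1)] at hi

def precompCons (G : Type*) [AddCommMonoid G] (c : A) :
    ((Fin (n + 1) → A) → G) →+ ((Fin n → A) → G) where
  toFun F y := F (Fin.cons c y)
  map_zero' := rfl
  map_add' _ _ := rfl

theorem comp_cons {F : (Fin (n + 1) → A) → G} (hF : IsJuntaSum d F) (c : A) :
    IsJuntaSum d (fun y => F (Fin.cons c y)) :=
  hF.map (precompCons G c)
    fun _ I hI hg => of_dependsOnlyOn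
      ((card_le_card_of_injOn Fin.succ (by intro i; simp) (Fin.succ_injective _).injOn).trans hI)
      (hg.comp_cons c)

end AddCommMonoid

section AddCommGroup

variable [AddCommGroup G] {F F' : (Fin n → A) → G}

theorem neg (hF : IsJuntaSum d F) : IsJuntaSum d (-F) :=
  hF.map negAddMonoidHom fun _ _ hI hg =>
    of_dependsOnlyOn hI fun x y hxy => congrArg Neg.neg (hg x y hxy)

theorem sub (hF : IsJuntaSum d F) (hF' : IsJuntaSum d F') : IsJuntaSum d (F - F') :=
  sub_eq_add_neg F F' ▸ hF.add hF'.neg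

theorem sub_comp_cons {F : (Fin (n + 1) → A) → G} (hF : IsJuntaSum d F) (c c' : A) :
    IsJuntaSum (d - 1) (fun y => F (Fin.cons c y) - F (Fin.cons c' y)) := by
  refine hF.map (precompCons G c - precompCons G c') fun g I hI hg => ?_
  by_cases h0 : 0 ∈ I
  · have hcard : #{i : Fin n | i.succ ∈ I} ≤ d - 1 := by
      have := Fin.card_filter_univ_succ (· ∈ I)
      simp only [h0, if_true, filter_mem_eq_inter, univ_inter] at this
      omega
    exact (of_dependsOnlyOn hcard (hg.comp_cons c)).sub
      (of_dependsOnlyOn hcard (hg.comp_cons c'))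
  · convert (zero : IsJuntaSum (d - 1) (0 : (Fin n → A) → G))
    funext y
    simp [precompCons, hg.cons_eq_cons h0 c c' y]

end AddCommGroup

end IsJuntaSum

theorem Fin.card_filter_eq_sum_card_filter_cons {n : ℕ} {A : Type*} [Fintype A]
    (p : (Fin (n + 1) → A) → Prop) [DecidablePred p] :
    #{x | p x} = ∑ c, #{y : Fin n → A | p (Fin.cons c y)} := by
  simp only [card_filter]
  rw [← (Fin.consEquiv fun _ => A).sum_comp, Fintype.sum_prod_type]
  rfl

theorem card_filter_sub_ne_zero_le {α G : Type*} [Fintype α] [AddGroup G] [DecidableEq G]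
    (f g : α → G) : #{x | f x - g x ≠ 0} ≤ #{x | f x ≠ 0} + #{x | g x ≠ 0} := by
  classical
  calc #{x | f x - g x ≠ 0} ≤ #{x | f x ≠ 0 ∨ g x ≠ 0} := by
        refine card_le_card fun x => ?_
        simp only [mem_filter, mem_univ, true_and]
        contrapose!
        rintro ⟨hf, hg⟩
        rw [hf, hg, sub_zero]
    _ ≤ _ := by
        rw [filter_or]
        exact card_union_le _ _

namespace IsJuntaSum

variable {A G : Type*} [Fintype A] [AddCommGroup G] [DecidableEq G]

theorem card_pow_sub_le_card_ne_zero {n d : ℕ} {F : (Fin n → A) → G} (hF : IsJuntaSum d F)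
    (hF0 : F ≠ 0) : Fintype.card A ^ (n - d) ≤ #{x | F x ≠ 0} := by
  classical
  induction n generalizing d with
  | zero =>
    obtain ⟨x, hx⟩ := Function.ne_iff.mp hF0
    rw [Nat.zero_sub, pow_zero]
    exact card_pos.mpr ⟨x, mem_filter.mpr ⟨mem_univ x, hx⟩⟩
  | succ n ih =>
    rw [Fin.card_filter_eq_sum_card_filter_cons]
    by_cases hdep : ∃ c c', (fun y => F (Fin.cons c y)) ≠ fun y => F (Fin.cons c' y)
    · obtain ⟨c, c', hcc'⟩ := hdep
      have hd : d ≠ 0 := by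
        rintro rfl
        exact hcc' (funext fun y => hF.apply_eq_of_zero_degree _ _)
      have hD := ih (hF.sub_comp_cons c c') (by simpa [sub_eq_zero, funext_iff] using hcc')
      have hcc : c ≠ c' := by
        rintro rfl
        exact hcc' rfl
      calc Fintype.card A ^ (n + 1 - d) = Fintype.card A ^ (n - (d - 1)) := by congr 1; omega
        _ ≤ #{y | F (Fin.cons c y) - F (Fin.cons c' y) ≠ 0} := hD
        _ ≤ #{y | F (Fin.cons c y) ≠ 0} + #{y | F (Fin.cons c' y) ≠ 0} :=
          card_filter_sub_ne_zero_le _ _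
        _ = ∑ a ∈ {c, c'}, #{y | F (Fin.cons a y) ≠ 0} :=
          (sum_pair (f := fun a => #{y | F (Fin.cons a y) ≠ 0}) hcc).symm
        _ ≤ ∑ a, #{y | F (Fin.cons a y) ≠ 0} := sum_le_sum_of_subset (subset_univ _)
    · simp only [not_exists, not_not, funext_iff] at hdep
      obtain ⟨x, hx⟩ := Function.ne_iff.mp hF0
      have hx0 : (fun y => F (Fin.cons (x 0) y)) ≠ 0 :=
        Function.ne_iff.mpr ⟨Fin.tail x, by simpa [Fin.cons_self_tail] using hx⟩
      have hslice (a : A) : #{y | F (Fin.cons a y) ≠ 0} = #{y | F (Fin.cons (x 0) y) ≠ 0} := by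
        simp only [hdep a (x 0)]
      have hsum : ∑ a, #{y | F (Fin.cons a y) ≠ 0} =
          Fintype.card A * #{y | F (Fin.cons (x 0) y) ≠ 0} := by
        rw [sum_congr rfl fun a _ => hslice a, sum_const, card_univ, smul_eq_mul]
      calc Fintype.card A ^ (n + 1 - d) ≤ Fintype.card A ^ (n - d + 1) :=
            Nat.pow_le_pow_right (Fintype.card_pos_iff.mpr ⟨x 0⟩) (by omega)
        _ = Fintype.card A * Fintype.card A ^ (n - d) := pow_succ' _ _
        _ ≤ Fintype.card A * #{y | F (Fin.cons (x 0) y) ≠ 0} :=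
            Nat.mul_le_mul_left _ (ih (hF.comp_cons (x 0)) hx0)
        _ = _ := hsum.symm

end IsJuntaSum

theorem stmt2_general {s n d : ℕ} [NeZero s] {G : Type*} [AddCommGroup G]
    (P Q : (Fin n → ZMod s) → G)
    (hP : IsJuntaSum d P) (hQ : IsJuntaSum d Q) (hne : P ≠ Q) :
    (1 : ℝ) / (s : ℝ) ^ d ≤ ({a : Fin n → ZMod s | P a ≠ Q a}.ncard : ℝ) / (s : ℝ) ^ n := by
  classical
  have hcount : s ^ (n - d) ≤ {a : Fin n → ZMod s | P a ≠ Q a}.ncard := by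
    have h := (hP.sub hQ).card_pow_sub_le_card_ne_zero (sub_ne_zero.mpr hne)
    rw [ZMod.card, ← Set.ncard_coe_finset] at h
    simpa [sub_eq_zero] using h
  have hs : 0 < s := NeZero.pos s
  rw [div_le_div_iff₀ (by positivity) (by positivity), one_mul]
  exact_mod_cast calc s ^ n ≤ s ^ (n - d + d) := Nat.pow_le_pow_right hs (by omega)
    _ = s ^ (n - d) * s ^ d := pow_add _ _ _
    _ ≤ _ := Nat.mul_le_mul_right _ hcount

/-- Distance lemma for junta-sums: two distinct `d`-junta-sums
`P, Q : ℤ_s^n → G` differ on at least a `1/s^d` fraction of points. -/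
theorem stmt2 {s n d : ℕ} [NeZero s] (hd : d ≤ n) {G : Type*} [AddCommGroup G]
    (P Q : (Fin n → ZMod s) → G)
    (hP : IsJuntaSum d P) (hQ : IsJuntaSum d Q) (hne : P ≠ Q) :
    (1 : ℝ) / (s : ℝ) ^ d ≤ ({a : Fin n → ZMod s | P a ≠ Q a}.ncard : ℝ) / (s : ℝ) ^ n :=
  stmt2_general P Q hP hQ hne
end

section
/- Let $n = ms$ for integers $m \ge d \ge 0$ and $s \ge 2$ with $n \ge sd$. Then $\binom{n - sd}{m-d,\,m-d,\,\dots,\,m-d} \big/ \binom{n}{m,\,m,\,\dots,\,m} \ge \frac{1}{(sd)^{sd}}$ when $d \ge 1$ (and the ratio is 1 when $d = 0$). Consequently, if a $d$-junta-sum $P : \mathbb{Z}_s^n \to G$ is nonzero at some point of the balanced multislice $\mathcal{S}^n_\mu$ (where each symbol appears exactly $m = n/s$ times), then $\Pr_{\mathbf{x} \sim \mathcal{S}^n_\mu}[P(\mathbf{x}) \ne 0] \ge 1/(sd)^{sd}$. -/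
/-!
Both bounds rest on `r = (m - d + 1) / n ≥ 1 / (sd)`. The multinomial ratio is at least `r ^ (sd)`
since `(n)! / (n - sd)! ≤ n ^ (sd)` and `m! / (m - d)! ≥ (m - d + 1) ^ d`.

For the junta-sum, induct on `d`. If `P` is invariant under every transposition at every point of
the multislice, it is constant there, since transpositions connect the multislice. Otherwise
`P x ≠ P (x ∘ swap j k)` for some `x`, `j`, `k`. Then the swap derivative `Q` of `P` at `j, k` is a
`(d - 1)`-junta-sum, nonzero at `x`, on the sub-multislice `{y | y j = x j ∧ y k = x k}`. That
sub-multislice holds at least an `r ^ 2` fraction of the points, and each `y` there with `Q y ≠ 0`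
gives a distinct nonzero of `P`, namely `y` or `y ∘ swap j k`. So `P` is nonzero on at least an
`r ^ (2d) ≥ (sd) ^ (-sd)` fraction.
-/

open Finset

open Function
open scoped Nat

section Multislice

variable {ι α : Type*} [Fintype ι] [DecidableEq ι] [Fintype α] [DecidableEq α]
  {E : Finset ι} {β : ι → α} {c : α → ℕ} {a x y : ι → α} {j k : ι} {σ τ : α}

/-- The balanced multislice is `multislice univ β (fun _ => m)` for any `β`; proper subsets `E`
arise by fixing coordinates. -/
def multislice (E : Finset ι) (β : ι → α) (c : α → ℕ) : Finset (ι → α) :=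
  {a | (∀ j ∉ E, a j = β j) ∧ ∀ σ, #{j ∈ E | a j = σ} = c σ}

theorem mem_multislice :
    a ∈ multislice E β c ↔ (∀ j ∉ E, a j = β j) ∧ ∀ σ, #{j ∈ E | a j = σ} = c σ := by
  simp [multislice]

theorem coe_multislice_univ (β : ι → α) (c : α → ℕ) :
    (multislice univ β c : Set (ι → α)) = {a | ∀ σ, {j | a j = σ}.ncard = c σ} := by
  ext a
  simp [mem_multislice, Set.ncard_eq_toFinset_card']

theorem coe_filter_multislice_univ (β : ι → α) (c : α → ℕ) (p : (ι → α) → Prop)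
    [DecidablePred p] :
    (({a ∈ multislice univ β c | p a} : Finset (ι → α)) : Set (ι → α)) =
      {a | (∀ σ, {j | a j = σ}.ncard = c σ) ∧ p a} := by
  ext a
  simp [mem_multislice, Set.ncard_eq_toFinset_card']

theorem le_card_of_mem_multislice (ha : a ∈ multislice E β c) (σ : α) :
    c σ ≤ Fintype.card ι :=
  (mem_multislice.1 ha).2 σ ▸ (card_filter_le _ _).trans (card_le_univ E)

theorem comp_swap_mem_multislice (hj : j ∈ E) (hk : k ∈ E) (ha : a ∈ multislice E β c) :
    a ∘ Equiv.swap j k ∈ multislice E β c := by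
  have hswap (l : ι) : Equiv.swap j k l ∈ E ↔ l ∈ E := by
    rw [Equiv.swap_apply_def]; split_ifs <;> simp_all
  have hfix (l : ι) (hl : l ∉ E) : Equiv.swap j k l = l :=
    Equiv.swap_apply_of_ne_of_ne (by rintro rfl; exact hl hj) (by rintro rfl; exact hl hk)
  obtain ⟨hout, hcount⟩ := mem_multislice.1 ha
  refine mem_multislice.2 ⟨fun l hl => by simp [hfix l hl, hout l hl], fun τ => ?_⟩
  rw [← hcount τ]
  exact card_equiv (Equiv.swap j k) (by simp [hswap])

theorem comp_swap_mem_multislice_iff (hj : j ∈ E) (hk : k ∈ E) :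
    a ∘ Equiv.swap j k ∈ multislice E β c ↔ a ∈ multislice E β c :=
  ⟨fun h => by
    simpa [comp_assoc, ← Equiv.Perm.coe_mul] using comp_swap_mem_multislice hj hk h,
    comp_swap_mem_multislice hj hk⟩

theorem mem_multislice_erase_iff (hj : j ∈ E) (hc : 1 ≤ c σ) :
    a ∈ multislice (E.erase j) (update β j σ) (update c σ (c σ - 1)) ↔
      a ∈ multislice E β c ∧ a j = σ := by
  have hcount (ρ : α) :
      #{l ∈ E | a l = ρ} = (if a j = ρ then 1 else 0) + #{l ∈ E.erase j | a l = ρ} := by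
    rw [card_filter, card_filter, add_sum_erase _ (fun l => if a l = ρ then 1 else 0) hj]
  have hout :
      (∀ l ∉ E.erase j, a l = update β j σ l) ↔ (∀ l ∉ E, a l = β l) ∧ a j = σ := by
    refine ⟨fun h => ⟨fun l hl => ?_, by simpa using h j (notMem_erase j E)⟩,
      fun h l hl => ?_⟩
    · have hlj : l ≠ j := by rintro rfl; exact hl hj
      simpa [hlj] using h l (fun h => hl (mem_of_mem_erase h))
    · rcases eq_or_ne l j with rfl | hlj
      · simpa using h.2
      · simpa [hlj] using h.1 l (by simpa [hlj] using hl)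
  simp only [mem_multislice, hout]
  constructor
  · rintro ⟨⟨hout, haj⟩, hcnt⟩
    refine ⟨⟨hout, fun ρ => ?_⟩, haj⟩
    have := hcnt ρ
    rw [hcount]
    rcases eq_or_ne ρ σ with rfl | hρ <;> simp_all [Ne.symm]
  · rintro ⟨⟨hout, hcnt⟩, haj⟩
    refine ⟨⟨hout, haj⟩, fun ρ => ?_⟩
    have := hcount ρ
    rcases eq_or_ne ρ σ with rfl | hρ <;> simp_all [Ne.symm]

theorem card_mul_card_multislice_erase (hj : j ∈ E) (hc : 1 ≤ c σ) :
    #E * #(multislice (E.erase j) (update β j σ) (update c σ (c σ - 1))) =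
      c σ * #(multislice E β c) := by
  set M := multislice E β c
  have hsymm : ∀ p ∈ E, #{a ∈ M | a p = σ} = #{a ∈ M | a j = σ} := fun p hp => by
    let e := (Equiv.swap p j).arrowCongr (Equiv.refl α)
    have he (a : ι → α) : e a = a ∘ Equiv.swap p j := by ext; simp [e]
    exact card_equiv e fun a => by simp [M, he, comp_swap_mem_multislice_iff hp hj]
  have hdouble : ∑ p ∈ E, #{a ∈ M | a p = σ} = c σ * #M :=
    calc ∑ p ∈ E, #{a ∈ M | a p = σ} = ∑ a ∈ M, #{p ∈ E | a p = σ} :=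
          sum_card_bipartiteAbove_eq_sum_card_bipartiteBelow fun (p : ι) (a : ι → α) => a p = σ
      _ = ∑ a ∈ M, c σ := sum_congr rfl fun a ha => (mem_multislice.1 ha).2 σ
      _ = c σ * #M := by rw [sum_const, smul_eq_mul, mul_comm]
  have hfilter : multislice (E.erase j) (update β j σ) (update c σ (c σ - 1)) =
      {a ∈ M | a j = σ} := by
    ext a; rw [mem_multislice_erase_iff hj hc, mem_filter]
  rw [hfilter, ← hdouble, sum_congr rfl hsymm, sum_const, smul_eq_mul]

theorem div_card_mul_card_multislice_le {B : ℕ} (hj : j ∈ E) (hc : B + 1 ≤ c σ) :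
    ((B + 1 : ℝ) / Fintype.card ι) * #(multislice E β c) ≤
      #(multislice (E.erase j) (update β j σ) (update c σ (c σ - 1))) := by
  rcases (Fintype.card ι).eq_zero_or_pos with h | h
  · simp [h]
  rw [div_mul_eq_mul_div, div_le_iff₀ (by exact_mod_cast h), mul_comm _ (Fintype.card ι : ℝ)]
  exact_mod_cast (Nat.mul_le_mul_right _ hc).trans
    ((card_mul_card_multislice_erase hj (by omega)).ge.trans
      (Nat.mul_le_mul_right _ (card_le_univ E)))

theorem exists_multislice_eq_filter {B : ℕ} (hj : j ∈ E) (hk : k ∈ E) (hjk : j ≠ k)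
    (hστ : σ ≠ τ) (hσ : B + 1 ≤ c σ) (hτ : B + 1 ≤ c τ) :
    ∃ (E' : Finset ι) (β' : ι → α) (c' : α → ℕ),
      multislice E' β' c' = {a ∈ multislice E β c | a j = σ ∧ a k = τ} ∧
      (∀ ρ, c ρ ≤ c' ρ + 1) ∧
      ((B + 1 : ℝ) / Fintype.card ι) ^ 2 * #(multislice E β c) ≤ #(multislice E' β' c') := by
  set c₁ := update c σ (c σ - 1)
  have hc₁τ : c₁ τ = c τ := update_of_ne hστ.symm _ _
  have hk₁ : k ∈ E.erase j := mem_erase.2 ⟨hjk.symm, hk⟩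
  refine ⟨(E.erase j).erase k, update (update β j σ) k τ, update c₁ τ (c₁ τ - 1), ?_,
    fun ρ => ?_, ?_⟩
  · ext a
    rw [mem_multislice_erase_iff hk₁ (by omega), mem_multislice_erase_iff hj (by omega),
      mem_filter, and_assoc]
  · rcases eq_or_ne ρ τ with rfl | hρτ
    · rw [update_self, hc₁τ]; omega
    rcases eq_or_ne ρ σ with rfl | hρσ
    · simp [update_of_ne hρτ, c₁]; omega
    · simp [update_of_ne hρτ, update_of_ne hρσ, c₁]
  · set r : ℝ := (B + 1 : ℝ) / Fintype.card ι
    have h₁ := div_card_mul_card_multislice_le (β := β) hj hσ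
    have h₂ := div_card_mul_card_multislice_le (β := update β j σ) hk₁ (hc₁τ ▸ hτ)
    calc r ^ 2 * #(multislice E β c) = r * (r * #(multislice E β c)) := by ring
      _ ≤ _ := mul_le_mul_of_nonneg_left h₁ (by positivity)
      _ ≤ _ := h₂

theorem exists_swap_card_lt (hx : x ∈ multislice E β c) (hy : y ∈ multislice E β c)
    (hxy : x ≠ y) :
    ∃ j ∈ E, ∃ k ∈ E, #{l | (x ∘ Equiv.swap j k) l ≠ y l} < #{l | x l ≠ y l} := by
  obtain ⟨j, hj⟩ := Function.ne_iff.1 hxy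
  have hjE : j ∈ E := by
    by_contra h
    exact hj (((mem_multislice.1 hx).1 j h).trans ((mem_multislice.1 hy).1 j h).symm)
  obtain ⟨k, hkE, hxk, hyk⟩ : ∃ k ∈ E, x k = y j ∧ y k ≠ y j := by
    by_contra! h
    have hsub : {l ∈ E | x l = y j} ⊆ {l ∈ E | y l = y j} := fun l hl => by
      simp only [mem_filter] at hl ⊢; exact ⟨hl.1, h l hl.1 hl.2⟩
    have heq := eq_of_subset_of_card_le hsub
      (by rw [(mem_multislice.1 hx).2, (mem_multislice.1 hy).2])
    have : j ∈ {l ∈ E | x l = y j} := heq ▸ (by simp [hjE])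
    exact hj (mem_filter.1 this).2
  refine ⟨j, hjE, k, hkE, card_lt_card <|
    (ssubset_iff_of_subset ?_).2 ⟨j, by simpa using hj, by simp [hxk]⟩⟩
  intro l hl
  simp only [mem_filter, mem_univ, true_and, comp_apply] at hl ⊢
  rcases eq_or_ne l j with rfl | hlj
  · simp [hxk] at hl
  rcases eq_or_ne l k with rfl | hlk
  · rwa [hxk, ne_comm]
  rwa [Equiv.swap_apply_of_ne_of_ne hlj hlk] at hl

theorem forall_mem_multislice_of_swap_closed {p : (ι → α) → Prop}
    (hp : ∀ x ∈ multislice E β c, p x → ∀ j ∈ E, ∀ k ∈ E, p (x ∘ Equiv.swap j k))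
    (hx : x ∈ multislice E β c) (hpx : p x) (hy : y ∈ multislice E β c) : p y := by
  induction hn : #{l | x l ≠ y l} using Nat.strong_induction_on generalizing x with
  | _ n ih =>
  by_cases hxy : x = y
  · exact hxy ▸ hpx
  obtain ⟨j, hj, k, hk, hlt⟩ := exists_swap_card_lt hx hy hxy
  exact ih _ (hn ▸ hlt) (comp_swap_mem_multislice hj hk hx) (hp x hx hpx j hj k hk) rfl

end Multislice

section JuntaSum

variable {n : ℕ} {A G : Type*}

theorem DependsOnlyOn.comp_update {g : (Fin n → A) → G} {I : Finset (Fin n)}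
    (hg : DependsOnlyOn g I) (j : Fin n) (v : A) :
    DependsOnlyOn (fun y => g (update y j v)) (I.erase j) := fun x y h =>
  hg _ _ fun i hi => by
    rcases eq_or_ne i j with rfl | hij
    · simp
    · simp [hij, h i (mem_erase.2 ⟨hij, hi⟩)]

theorem DependsOnlyOn.apply_update_of_notMem {g : (Fin n → A) → G} {I : Finset (Fin n)}
    (hg : DependsOnlyOn g I) {j : Fin n} (hj : j ∉ I) (y : Fin n → A) (v : A) :
    g (update y j v) = g y :=
  hg _ _ fun _ hi => update_of_ne (ne_of_mem_of_not_mem hi hj) _ _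

theorem DependsOnlyOn.sub [AddGroup G] {f g : (Fin n → A) → G} {I : Finset (Fin n)}
    (hf : DependsOnlyOn f I) (hg : DependsOnlyOn g I) : DependsOnlyOn (f - g) I :=
  fun x y h => congr_arg₂ (· - ·) (hf x y h) (hg x y h)

theorem IsJuntaSum.apply_eq_of_zero [AddCommMonoid G] {P : (Fin n → A) → G}
    (hP : IsJuntaSum 0 P) (x y : Fin n → A) : P x = P y := by
  obtain ⟨K, g, I, hgI, hsum⟩ := hP
  rw [hsum, hsum]
  refine sum_congr rfl fun i _ => (hgI i).2 x y fun l hl => ?_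
  simp [card_eq_zero.1 (Nat.le_zero.1 (hgI i).1)] at hl

/-- At `y` with `y j = σ`, `y k = τ` this is `P y - P (y ∘ swap j k)` (`swapDeriv_apply`); the
`update`s make it independent of the coordinates `j` and `k`. -/
def swapDeriv [AddGroup G] (P : (Fin n → A) → G) (j k : Fin n) (σ τ : A) (y : Fin n → A) :
    G :=
  P (update (update y k τ) j σ) - P (update (update y k σ) j τ)

theorem swapDeriv_apply [AddGroup G] (P : (Fin n → A) → G) {j k : Fin n} {σ τ : A}
    {y : Fin n → A} (hj : y j = σ) (hk : y k = τ) :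
    swapDeriv P j k σ τ y = P y - P (y ∘ Equiv.swap j k) := by
  subst hj hk
  rw [swapDeriv, Equiv.comp_swap_eq_update, update_eq_self, update_eq_self]

theorem IsJuntaSum.swapDeriv [AddCommGroup G] {d : ℕ} {P : (Fin n → A) → G}
    (hP : IsJuntaSum (d + 1) P) (j k : Fin n) (σ τ : A) :
    IsJuntaSum d (swapDeriv P j k σ τ) := by
  obtain ⟨K, g, I, hgI, hsum⟩ := hP
  refine ⟨K, fun i => _root_.swapDeriv (g i) j k σ τ,
    fun i => if j ∈ I i ∨ k ∈ I i then ((I i).erase j).erase k else ∅, fun i => ?_,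
    fun y => by simp only [_root_.swapDeriv, hsum, sum_sub_distrib]⟩
  obtain ⟨hcard, hdep⟩ := hgI i
  dsimp only
  split_ifs with h
  · have hsub : ((I i).erase j).erase k ⊂ I i := by
      refine (ssubset_iff_of_subset ((erase_subset _ _).trans (erase_subset _ _))).2 ?_
      rcases h with hj | hk
      · exact ⟨j, hj, fun h => notMem_erase j _ (mem_of_mem_erase h)⟩
      · exact ⟨k, hk, notMem_erase k _⟩
    exact ⟨by have := card_lt_card hsub; omega,
      ((hdep.comp_update j σ).comp_update k τ).sub ((hdep.comp_update j τ).comp_update k σ)⟩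
  · rw [not_or] at h
    refine ⟨by simp, fun x y _ => ?_⟩
    simp [_root_.swapDeriv, hdep.apply_update_of_notMem h.1, hdep.apply_update_of_notMem h.2]

end JuntaSum

section Descent

variable {n : ℕ} {α G : Type*} [DecidableEq α] [AddCommGroup G] [DecidableEq G]

theorem card_filter_swapDeriv_ne_zero_le (P : (Fin n → α) → G) {T : Finset (Fin n → α)}
    {j k : Fin n} {σ τ : α} (hστ : σ ≠ τ) (hT : ∀ a ∈ T, a ∘ Equiv.swap j k ∈ T) :
    #{a ∈ T | (a j = σ ∧ a k = τ) ∧ swapDeriv P j k σ τ a ≠ 0} ≤ #{a ∈ T | P a ≠ 0} := by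
  have hne : ∀ a ∈ T, ∀ b ∈ T, a j = σ → b k = τ → a ≠ b ∘ Equiv.swap j k :=
    fun a _ b _ ha hb h => hστ (by rw [← ha, ← hb, h]; simp)
  refine card_le_card_of_injOn (fun a => if P a ≠ 0 then a else a ∘ Equiv.swap j k) ?_ ?_
  · intro a ha
    obtain ⟨haT, ⟨haj, hak⟩, hQ⟩ := mem_filter.1 ha
    rw [swapDeriv_apply P haj hak] at hQ
    simp only [coe_filter, Set.mem_ofPred_eq]
    split_ifs with h
    · exact ⟨haT, h⟩
    · exact ⟨hT a haT, fun h' => hQ (by rw [not_not.1 h, h', sub_zero])⟩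
  · intro a ha b hb hab
    simp only [coe_filter, Set.mem_ofPred_eq] at ha hb
    dsimp only at hab
    split_ifs at hab
    · exact hab
    · exact absurd hab (hne a ha.1 b hb.1 ha.2.1.1 hb.2.1.2)
    · exact absurd hab.symm (hne b hb.1 a ha.1 hb.2.1.1 ha.2.1.2)
    · exact (Equiv.swap j k).surjective.injective_comp_right hab

theorem IsJuntaSum.pow_mul_card_multislice_le [Fintype α] {B d : ℕ}
    {P : (Fin n → α) → G} (hP : IsJuntaSum d P) {E : Finset (Fin n)} {β : Fin n → α}
    {c : α → ℕ} (hc : ∀ σ, B + d ≤ c σ) {a₀ : Fin n → α} (ha₀ : a₀ ∈ multislice E β c)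
    (hP0 : P a₀ ≠ 0) :
    ((B + 1 : ℝ) / n) ^ (2 * d) * #(multislice E β c) ≤
      #{a ∈ multislice E β c | P a ≠ 0} := by
  induction d generalizing P E β c a₀ with
  | zero =>
    rw [mul_zero, pow_zero, one_mul,
      filter_true_of_mem fun a _ => hP.apply_eq_of_zero a a₀ ▸ hP0]
  | succ d ih =>
    set M := multislice E β c
    by_cases hswap : ∃ x ∈ M, ∃ j ∈ E, ∃ k ∈ E, P (x ∘ Equiv.swap j k) ≠ P x
    · obtain ⟨x, hx, j, hj, k, hk, hne⟩ := hswap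
      have hjk : j ≠ k := by rintro rfl; simp at hne
      have hστ : x j ≠ x k := fun h => hne <| congr_arg P <| by
        ext l; rw [comp_apply, Equiv.swap_apply_def]; split_ifs <;> simp_all
      obtain ⟨E', β', c', hM', hc', hsize⟩ := exists_multislice_eq_filter (β := β)
        (B := B) hj hk hjk hστ ((hc _).trans' (by omega)) ((hc _).trans' (by omega))
      rw [Fintype.card_fin] at hsize
      have hQx : _root_.swapDeriv P j k (x j) (x k) x ≠ 0 := by
        rw [swapDeriv_apply P rfl rfl]; exact sub_ne_zero.2 hne.symm
      have hxM' : x ∈ multislice E' β' c' := by rw [hM', mem_filter]; exact ⟨hx, rfl, rfl⟩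
      have hQ := ih (hP.swapDeriv j k (x j) (x k))
        (fun ρ => by have := hc ρ; have := hc' ρ; omega) hxM' hQx
      have hinj : #{a ∈ multislice E' β' c' | _root_.swapDeriv P j k (x j) (x k) a ≠ 0} ≤
          #{a ∈ M | P a ≠ 0} := by
        rw [hM', filter_filter]
        exact card_filter_swapDeriv_ne_zero_le P hστ fun a => comp_swap_mem_multislice hj hk
      calc ((B + 1 : ℝ) / n) ^ (2 * (d + 1)) * #M
          = ((B + 1 : ℝ) / n) ^ (2 * d) * (((B + 1 : ℝ) / n) ^ 2 * #M) := by ring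
        _ ≤ ((B + 1 : ℝ) / n) ^ (2 * d) * #(multislice E' β' c') := by gcongr
        _ ≤ _ := hQ
        _ ≤ _ := by exact_mod_cast hinj
    · push Not at hswap
      have hall : ∀ y ∈ M, P y ≠ 0 := fun y hy =>
        forall_mem_multislice_of_swap_closed (p := (P · ≠ 0))
          (fun x hx hPx j hj k hk => hswap x hx j hj k hk ▸ hPx) ha₀ hP0 hy
      have hr : (B + 1 : ℝ) / n ≤ 1 := by
        rcases n.eq_zero_or_pos with rfl | hn
        · simp
        have := le_card_of_mem_multislice ha₀ (a₀ ⟨0, hn⟩)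
        have := hc (a₀ ⟨0, hn⟩)
        rw [div_le_one (by positivity)]
        exact_mod_cast (by simp at *; omega)
      rw [filter_true_of_mem hall]
      exact mul_le_of_le_one_left (by positivity) (pow_le_one₀ (by positivity) hr)

end Descent

theorem Nat.multinomial_const_mul_pow_le (ι : Type*) [Fintype ι] (e d : ℕ) :
    multinomial univ (fun _ : ι => e + d) * (e + 1) ^ (Fintype.card ι * d) ≤
      (Fintype.card ι * (e + d)) ^ (Fintype.card ι * d) * multinomial univ (fun _ : ι => e) := by
  set k := Fintype.card ι
  have hspec (a : ℕ) : a ! ^ k * multinomial univ (fun _ : ι => a) = (k * a)! := by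
    simpa [prod_const, sum_const, mul_comm] using multinomial_spec univ (fun _ : ι => a)
  have hdesc : (k * (e + d))! ≤ (k * (e + d)) ^ (k * d) * (k * e)! := by
    rw [← factorial_mul_descFactorial (show k * d ≤ k * (e + d) by gcongr; omega),
      show k * (e + d) - k * d = k * e by rw [mul_add, Nat.add_sub_cancel], mul_comm]
    exact Nat.mul_le_mul_right _ (descFactorial_le_pow _ _)
  have hfact : (e ! * (e + 1) ^ d) ^ k ≤ (e + d)! ^ k :=
    Nat.pow_le_pow_left factorial_mul_pow_le_factorial k
  refine Nat.le_of_mul_le_mul_left (c := (e + d)! ^ k * e ! ^ k) ?_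
    (Nat.mul_pos (pow_pos (factorial_pos _) _) (pow_pos (factorial_pos _) _))
  calc (e + d)! ^ k * e ! ^ k * (multinomial univ (fun _ : ι => e + d) * (e + 1) ^ (k * d))
      = (k * (e + d))! * (e ! * (e + 1) ^ d) ^ k := by rw [← hspec]; ring
    _ ≤ (k * (e + d)) ^ (k * d) * (k * e)! * (e + d)! ^ k := Nat.mul_le_mul hdesc hfact
    _ = _ := by rw [← hspec e]; ring

theorem pow_le_multinomial_div (ι : Type*) [Fintype ι] (e d : ℕ) :
    ((e + 1 : ℝ) / (Fintype.card ι * (e + d) : ℕ)) ^ (Fintype.card ι * d) ≤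
      (Nat.multinomial univ (fun _ : ι => e) : ℝ) /
        Nat.multinomial univ (fun _ : ι => e + d) := by
  rw [le_div_iff₀ (by exact_mod_cast Nat.multinomial_pos _ _), div_pow, div_mul_eq_mul_div]
  refine div_le_of_le_mul₀ (by positivity) (by positivity) ?_
  exact_mod_cast (by linarith [Nat.multinomial_const_mul_pow_le ι e d])

theorem one_div_pow_le_pow_sub_add_one_div {s m d : ℕ} (hd : 1 ≤ d) (hdm : d ≤ m) :
    1 / ((s * d : ℕ) : ℝ) ^ (s * d) ≤ (((m - d : ℕ) + 1 : ℝ) / (m * s : ℕ)) ^ (s * d) := by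
  rw [← one_div_pow]
  refine pow_le_pow_left₀ (by positivity) ?_ _
  rcases s.eq_zero_or_pos with rfl | hs
  · simp
  have hd' : (1 : ℝ) ≤ d := by exact_mod_cast hd
  have hm' : (1 : ℝ) ≤ m := by exact_mod_cast hd.trans hdm
  have hs' : (0 : ℝ) < s := by exact_mod_cast hs
  push_cast
  rw [div_le_div_iff₀ (by positivity) (by positivity), one_mul]
  have : m ≤ d * (m - d + 1) := by
    have := Nat.le_mul_of_pos_left (m - d) hd
    rw [mul_add_one]; omega
  exact_mod_cast (by nlinarith : m * s ≤ (m - d + 1) * (s * d))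

theorem one_div_pow_le_pow_two_mul {s m d : ℕ} (hs : 2 ≤ s) (hdm : d ≤ m) :
    1 / ((s * d : ℕ) : ℝ) ^ (s * d) ≤ (((m - d : ℕ) + 1 : ℝ) / (m * s : ℕ)) ^ (2 * d) := by
  rcases d.eq_zero_or_pos with rfl | hd
  · simp
  have hr : ((m - d : ℕ) + 1 : ℝ) / (m * s : ℕ) ≤ 1 := by
    have hms : m - d + 1 ≤ m * s :=
      (show m - d + 1 ≤ m by omega).trans (Nat.le_mul_of_pos_right m (by omega))
    rw [div_le_one (by exact_mod_cast (by omega : 0 < m * s))]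
    exact_mod_cast hms
  exact (one_div_pow_le_pow_sub_add_one_div hd hdm).trans
    (pow_le_pow_of_le_one (by positivity) hr (by nlinarith))

/-- With `n = m·s` and `m ≥ d`: the ratio of multinomial coefficients
`(n - sd choose m-d, …, m-d) / (n choose m, …, m)` equals `1` when `d = 0` and
is at least `1/(sd)^{sd}` when `d ≥ 1`.  Consequently a `d`-junta-sum
`P : ℤ_s^n → G` that is nonzero somewhere on the balanced multislice is nonzero
on at least a `1/(sd)^{sd}` fraction of the balanced multislice. -/
theorem stmt4 {s m d n : ℕ} (hs : 2 ≤ s) [NeZero s] (hmd : d ≤ m) (hn : n = m * s)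
    {G : Type*} [AddCommGroup G]
    (P : (Fin n → ZMod s) → G) (hP : IsJuntaSum d P)
    (a₀ : Fin n → ZMod s)
    (ha₀ : ∀ i : ZMod s, {j : Fin n | a₀ j = i}.ncard = m)
    (hP0 : P a₀ ≠ 0) :
    ((d = 0 →
        (Nat.multinomial Finset.univ (fun _ : ZMod s => m - d) : ℝ) /
          (Nat.multinomial Finset.univ (fun _ : ZMod s => m) : ℝ) = 1) ∧
      (1 ≤ d →
        (1 : ℝ) / ((s * d : ℕ) : ℝ) ^ (s * d) ≤
          (Nat.multinomial Finset.univ (fun _ : ZMod s => m - d) : ℝ) /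
            (Nat.multinomial Finset.univ (fun _ : ZMod s => m) : ℝ))) ∧
    (1 : ℝ) / ((s * d : ℕ) : ℝ) ^ (s * d) ≤
      ({a : Fin n → ZMod s |
          (∀ i : ZMod s, {j : Fin n | a j = i}.ncard = m) ∧ P a ≠ 0}.ncard : ℝ) /
        ({a : Fin n → ZMod s | ∀ i : ZMod s, {j : Fin n | a j = i}.ncard = m}.ncard : ℝ) := by
  classical
  subst hn
  have hratio := pow_le_multinomial_div (ZMod s) (m - d) d
  rw [ZMod.card, Nat.sub_add_cancel hmd, mul_comm s m] at hratio
  refine ⟨⟨fun hd => ?_, fun hd => (one_div_pow_le_pow_sub_add_one_div hd hmd).trans hratio⟩, ?_⟩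
  · subst hd
    simp [(Nat.multinomial_pos _ _).ne']
  set M := multislice univ a₀ (fun _ : ZMod s => m)
  have ha₀M : a₀ ∈ M := by rw [← mem_coe, coe_multislice_univ]; exact ha₀
  rw [← coe_multislice_univ a₀, ← coe_filter_multislice_univ a₀ _ (P · ≠ 0),
    Set.ncard_coe_finset, Set.ncard_coe_finset,
    le_div_iff₀ (by exact_mod_cast card_pos.2 ⟨a₀, ha₀M⟩)]
  calc 1 / ((s * d : ℕ) : ℝ) ^ (s * d) * #M
      ≤ (((m - d : ℕ) + 1 : ℝ) / (m * s : ℕ)) ^ (2 * d) * #M := by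
        gcongr; exact one_div_pow_le_pow_two_mul hs hmd
    _ ≤ _ := hP.pow_mul_card_multislice_le (fun _ => (Nat.sub_add_cancel hmd).le) ha₀M hP0
end

section
/- Fix integers $d \ge 0$ and $m \ge d$, and let $B \subseteq \mathbb{Z}_s^m$ be a Hamming ball of radius $d$ (centered at an arbitrary point $\mathbf{c}$). For every Abelian group $G$ and every $d$-junta-sum $P : \mathbb{Z}_s^m \to G$, there exist integer coefficients $(\alpha_{\mathbf{b}})_{\mathbf{b} \in B}$ (depending only on $B$, $s$, $m$, $d$ and not on $P$ or $G$) such that $P(0^m) = \sum_{\mathbf{b} \in B} \alpha_{\mathbf{b}} \cdot P(\mathbf{b})$, where an integer multiple $\alpha \cdot g$ of a group element is repeated addition. -/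
open Finset

universe u

/-- Universal interpolation coefficients: `coef n k` plays the role of the
coefficient attached to sets of size `d - k` (with `n = m - d`). -/
def coef (n : ℕ) : ℕ → ℤ
  | 0 => 1
  | (k+1) => -∑ l ∈ (Finset.range (k+1)).attach,
      (n.choose (k+1-(l:ℕ)) : ℤ) * coef n l
  decreasing_by exact Finset.mem_range.mp l.2

lemma coef_succ (n k : ℕ) :
    coef n (k+1) = -∑ l ∈ Finset.range (k+1), (n.choose (k+1-l) : ℤ) * coef n l := by
  rw [coef, ← Finset.sum_attach (Finset.range (k+1)) (fun l => (n.choose (k+1-l) : ℤ) * coef n l)]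

lemma coefSum (n K : ℕ) :
    ∑ k ∈ Finset.range (K+1), (n.choose (K-k) : ℤ) * coef n k
      = if K = 0 then 1 else 0 := by
  cases K with
  | zero => simp [coef]
  | succ K =>
    rw [Finset.sum_range_succ]
    simp only [Nat.sub_self, Nat.choose_zero_right, Nat.cast_one, one_mul, coef_succ]
    simp

lemma fiber_sum {m d : ℕ} (hd : d ≤ m) (I : Finset (Fin m)) (hI : I.card = d)
    (J : Finset (Fin m)) (hJ : J ⊆ I) :
    ∑ S ∈ Finset.univ.filter (fun S : Finset (Fin m) => S.card ≤ d ∧ S ∩ I = J),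
      coef (m - d) (d - S.card) = if J = I then 1 else 0 := by
  have hJd : J.card ≤ d := hI ▸ Finset.card_le_card hJ
  set K := d - J.card with hK
  -- bijection S ↔ R = S \ I
  have step1 :
      ∑ S ∈ Finset.univ.filter (fun S : Finset (Fin m) => S.card ≤ d ∧ S ∩ I = J),
        coef (m - d) (d - S.card)
      = ∑ R ∈ (Iᶜ.powerset).filter (fun R => R.card ≤ K),
          coef (m - d) (K - R.card) := by
    apply Finset.sum_nbij' (fun S => S \ I) (fun R => J ∪ R)
    · intro S hS
      simp only [Finset.mem_filter, Finset.mem_univ, true_and] at hS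
      simp only [Finset.mem_filter, Finset.mem_powerset]
      constructor
      · exact fun x hx => by simp only [Finset.mem_sdiff] at hx; simpa using hx.2
      · have hc : S.card = J.card + (S \ I).card := by
          rw [← hS.2, Finset.card_inter_add_card_sdiff]
        omega
    · intro R hR
      simp only [Finset.mem_filter, Finset.mem_powerset] at hR
      have hdisj : Disjoint J R := by
        refine Finset.disjoint_left.mpr fun a haJ haR => ?_
        have := hR.1 haR
        simp only [Finset.mem_compl] at this
        exact this (hJ haJ)
      have hRI : Disjoint R I := by
        refine Finset.disjoint_left.mpr fun a haR haI => ?_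
        have := hR.1 haR
        simp only [Finset.mem_compl] at this
        exact this haI
      simp only [Finset.mem_filter, Finset.mem_univ, true_and]
      constructor
      · rw [Finset.card_union_of_disjoint hdisj]; omega
      · rw [Finset.union_inter_distrib_right, Finset.inter_eq_left.mpr hJ,
          (Finset.disjoint_iff_inter_eq_empty.mp hRI), Finset.union_empty]
    · intro S hS
      simp only [Finset.mem_filter, Finset.mem_univ, true_and] at hS
      ext a
      simp only [← hS.2, Finset.mem_union, Finset.mem_inter, Finset.mem_sdiff]
      tauto
    · intro R hR
      simp only [Finset.mem_filter, Finset.mem_powerset] at hR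
      have hRI : Disjoint R I := by
        refine Finset.disjoint_left.mpr fun a haR haI => ?_
        have := hR.1 haR
        simp only [Finset.mem_compl] at this
        exact this haI
      rw [Finset.union_sdiff_distrib, Finset.sdiff_eq_empty_iff_subset.mpr hJ,
        Finset.empty_union, Finset.sdiff_eq_self_of_disjoint hRI]
    · intro S hS
      simp only [Finset.mem_filter, Finset.mem_univ, true_and] at hS
      have hc : S.card = J.card + (S \ I).card := by
        rw [← hS.2, Finset.card_inter_add_card_sdiff]
      congr 1
      omega
  rw [step1]
  -- group by cardinality
  have step2 :
      ∑ R ∈ (Iᶜ.powerset).filter (fun R => R.card ≤ K),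
          coef (m - d) (K - R.card)
      = ∑ t ∈ Finset.range (K+1), ((m - d).choose t : ℤ) * coef (m - d) (K - t) := by
    rw [← Finset.sum_fiberwise_of_maps_to (g := fun R : Finset (Fin m) => R.card)
      (fun R hR => by
        simp only [Finset.mem_filter] at hR
        show R.card ∈ Finset.range (K+1)
        exact Finset.mem_range.mpr (Nat.lt_succ_of_le hR.2))]
    refine Finset.sum_congr rfl fun t ht => ?_
    have ht' : t ≤ K := by simpa using Nat.lt_succ_iff.mp (Finset.mem_range.mp ht)
    have hset : ((Iᶜ.powerset).filter (fun R => R.card ≤ K)).filter (fun R => R.card = t)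
        = Finset.powersetCard t Iᶜ := by
      ext R
      simp only [Finset.mem_filter, Finset.mem_powerset, Finset.mem_powersetCard]
      constructor
      · rintro ⟨⟨h1, _⟩, h3⟩; exact ⟨h1, h3⟩
      · rintro ⟨h1, h2⟩; exact ⟨⟨h1, h2 ▸ ht'⟩, h2⟩
    rw [hset]
    rw [Finset.sum_congr rfl (fun R hR => by
      rw [(Finset.mem_powersetCard.mp hR).2])]
    rw [Finset.sum_const, Finset.card_powersetCard, Finset.card_compl,
      Fintype.card_fin, hI, nsmul_eq_mul]
  rw [step2]
  have step3 : ∑ t ∈ Finset.range (K+1), ((m - d).choose t : ℤ) * coef (m - d) (K - t)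
      = ∑ k ∈ Finset.range (K+1), ((m - d).choose (K - k) : ℤ) * coef (m - d) k := by
    rw [← Finset.sum_range_reflect]
    refine Finset.sum_congr rfl fun k hk => ?_
    have := Finset.mem_range.mp hk
    congr 2 <;> omega
  rw [step3, coefSum]
  have : K = 0 ↔ J = I := by
    constructor
    · intro h
      exact Finset.eq_of_subset_of_card_le hJ (by omega)
    · intro h; subst h; omega
  simp only [this]

lemma key {s m d : ℕ} [NeZero s] (c : Fin m → ZMod s) {G : Type*} [AddCommGroup G]
    (g : (Fin m → ZMod s) → G) (I : Finset (Fin m)) (hI : I.card = d)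
    (hg : DependsOnlyOn g I) :
    ∑ S ∈ Finset.univ.filter (fun S : Finset (Fin m) => S.card ≤ d),
      coef (m - d) (d - S.card) • g (fun i => if i ∈ S then 0 else c i)
      = g (fun _ => 0) := by
  have hd : d ≤ m := by
    rw [← hI]
    simpa using Finset.card_le_card (Finset.subset_univ I)
  -- replace g (x_S) by g (x_{S∩I})
  have hrw : ∀ S : Finset (Fin m),
      g (fun i => if i ∈ S then 0 else c i) = g (fun i => if i ∈ S ∩ I then 0 else c i) := by
    intro S
    apply hg
    intro i hi
    simp [Finset.mem_inter, hi]
  rw [Finset.sum_congr rfl (fun S _ => by rw [hrw S])]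
  rw [← Finset.sum_fiberwise_of_maps_to (g := fun S : Finset (Fin m) => S ∩ I)
    (t := I.powerset) (fun S _ => Finset.mem_powerset.mpr Finset.inter_subset_right)]
  have : ∀ J ∈ I.powerset,
      ∑ S ∈ (Finset.univ.filter (fun S : Finset (Fin m) => S.card ≤ d)).filter
          (fun S => S ∩ I = J),
        coef (m - d) (d - S.card) • g (fun i => if i ∈ S ∩ I then 0 else c i)
      = (if J = I then 1 else 0 : ℤ) • g (fun i => if i ∈ J then 0 else c i) := by
    intro J hJ
    rw [Finset.filter_filter]
    rw [Finset.sum_congr rfl (fun S hS => by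
      have h2 := (Finset.mem_filter.mp hS).2.2
      rw [h2])]
    rw [← Finset.sum_smul, fiber_sum hd I hI J (Finset.mem_powerset.mp hJ)]
  rw [Finset.sum_congr rfl this]
  simp only [ite_smul, one_smul, zero_smul]
  rw [Finset.sum_ite_eq' I.powerset I, if_pos (Finset.mem_powerset_self I)]
  apply hg
  intro i hi
  simp [hi]

/-- Interpolation from a Hamming ball: for every Hamming ball `B ⊆ ℤ_s^m` of
radius `d` (around an arbitrary center `c`), there are integer coefficients
`α_b` (depending only on the ball, not on `P` or `G`) such that for every
Abelian group `G` and every `d`-junta-sum `P : ℤ_s^m → G`,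
`P(0^m) = ∑_{b ∈ B} α_b • P(b)`. -/
theorem stmt6 {s m d : ℕ} [NeZero s] (hd : d ≤ m) (c : Fin m → ZMod s) :
    ∃ α : (Fin m → ZMod s) → ℤ,
      ∀ (G : Type u) [AddCommGroup G] (P : (Fin m → ZMod s) → G),
        IsJuntaSum d P →
        P (fun _ => 0) =
          ∑ b ∈ Finset.univ.filter (fun b : Fin m → ZMod s => hammingDist b c ≤ d),
            α b • P b := by
  classical
  set x : Finset (Fin m) → (Fin m → ZMod s) :=
    fun S => (fun i => if i ∈ S then 0 else c i) with hx
  refine ⟨fun b => ∑ S ∈ Finset.univ.filter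
      (fun S : Finset (Fin m) => S.card ≤ d ∧ x S = b), coef (m-d) (d - S.card), ?_⟩
  intro G _ P hP
  obtain ⟨k, g, I, hgI, hsum⟩ := hP
  set T : Finset (Finset (Fin m)) :=
    Finset.univ.filter (fun S : Finset (Fin m) => S.card ≤ d) with hT
  have hmaps : ∀ S ∈ T, x S ∈ Finset.univ.filter
      (fun b : Fin m → ZMod s => hammingDist b c ≤ d) := by
    intro S hS
    simp only [hT, Finset.mem_filter, Finset.mem_univ, true_and] at hS ⊢
    calc hammingDist (x S) c ≤ S.card := by
          rw [hammingDist]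
          apply Finset.card_le_card
          intro i hi
          simp only [Finset.mem_filter, Finset.mem_univ, true_and] at hi
          by_contra hiS
          exact hi (by simp [hx, hiS])
      _ ≤ d := hS
  have hRHS : ∑ b ∈ Finset.univ.filter
        (fun b : Fin m → ZMod s => hammingDist b c ≤ d),
      (∑ S ∈ Finset.univ.filter
        (fun S : Finset (Fin m) => S.card ≤ d ∧ x S = b), coef (m-d) (d - S.card)) • P b
      = ∑ S ∈ T, coef (m-d) (d - S.card) • P (x S) := by
    rw [← Finset.sum_fiberwise_of_maps_to (g := x) hmaps]
    refine Finset.sum_congr rfl fun b hb => ?_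
    rw [Finset.sum_smul]
    rw [hT, Finset.filter_filter]
    refine Finset.sum_congr rfl fun S hS => ?_
    rw [(Finset.mem_filter.mp hS).2.2]
  rw [hRHS]
  have hswap : ∑ S ∈ T, coef (m-d) (d - S.card) • P (x S)
      = ∑ j, ∑ S ∈ T, coef (m-d) (d - S.card) • g j (x S) := by
    rw [Finset.sum_comm]
    refine Finset.sum_congr rfl fun S _ => ?_
    rw [hsum (x S), smul_sum]
  rw [hswap, hsum (fun _ => 0)]
  refine Finset.sum_congr rfl fun j _ => ?_
  obtain ⟨J, hIJ, hJcard⟩ := Finset.exists_superset_card_eq (s := I j) (n := d)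
    (hgI j).1 (by simpa using hd)
  have hdep : DependsOnlyOn (g j) J := fun a b h =>
    (hgI j).2 a b (fun i hi => h i (hIJ hi))
  exact (key c (g j) J hJcard hdep).symm
end

section
/- Let $\mathbb{F}_q$ be a finite field, $S \subseteq \mathbb{F}_q$ with $|S| = s \ge 2$, and let $P_1,\dots,P_t$ be nonzero polynomials in $\mathbb{F}_q[x_1,\dots,x_n]$ of individual degree at most $s-1$ in each variable, such that the leading monomials $\mathrm{LM}(P_1),\dots,\mathrm{LM}(P_t)$ (with respect to graded lexicographic order) are supported on pairwise disjoint sets of variables, each involving at most $d$ variables. Then the set $Z = \{\mathbf{a} \in S^n : P_i(\mathbf{a}) = 0 \text{ for all } i\}$ of common zeros satisfies $|Z| \le (1 - 1/s^d)^t \cdot s^n$. -/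
/-
Reduce modulo the `P i` and the polynomials `∏_{c ∈ S} (X_j - c)` (whose leading monomials are
`X_j ^ s`) with the multivariate division algorithm for the graded lexicographic order:
every function on the common zero set `Z ⊆ S^n` is then the evaluation of a polynomial
supported on the standard monomials `x^v`, `v ∈ {0, …, s-1}^n`, not divisible by any `LM(P i)`.
Comparing the number of such functions with the number of such polynomials over the finite
field gives `|Z| ≤ #{standard v}` (the footprint bound). A uniformly random `v` avoids each
`LM(P i)` with probability at most `1 - 1/s^d`, and since the leading monomials involve
disjoint sets of variables these events are independent.
-/

open Finset

/-- Graded lexicographic order on exponent vectors: `e < f` iff the total degree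
of `e` is smaller, or the total degrees agree and `e` is lexicographically
smaller. -/
def GrlexLT {n : ℕ} (e f : Fin n →₀ ℕ) : Prop :=
  (∑ i, e i) < (∑ i, f i) ∨
    ((∑ i, e i) = (∑ i, f i) ∧ ∃ i : Fin n, (∀ j, j < i → e j = f j) ∧ e i < f i)

open MvPolynomial MonomialOrder Function

theorem grlexLT_iff_degLex_lt {n : ℕ} {e f : Fin n →₀ ℕ} :
    GrlexLT e f ↔ e ≺[degLex] f := by
  rw [degLex_lt_iff, Finsupp.DegLex.lt_iff, GrlexLT, ofDegLex_toDegLex, ofDegLex_toDegLex,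
    Finsupp.degree_eq_sum, Finsupp.degree_eq_sum]
  rfl

theorem degLex_degree_eq_of_grlexLT {R : Type*} [CommSemiring R] {n : ℕ}
    {p : MvPolynomial (Fin n) R} {μ : Fin n →₀ ℕ} (hμ : μ ∈ p.support)
    (hlt : ∀ e ∈ p.support, e ≠ μ → GrlexLT e μ) : degLex.degree p = μ := by
  by_contra h
  have hp : p ≠ 0 := support_nonempty.1 ⟨μ, hμ⟩
  exact not_lt.2 (degLex.le_degree hμ)
    (grlexLT_iff_degLex_lt.1 (hlt _ (degLex.degree_mem_support hp) h))

theorem MonomialOrder.degree_prod_X_sub_C {σ R : Type*} [CommRing R] [IsDomain R]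
    (m : MonomialOrder σ) (j : σ) (S : Finset R) :
    m.degree (∏ c ∈ S, (X j - C c)) = Finsupp.single j #S := by
  rw [m.degree_prod fun c _ => (m.monic_X_sub_C j c).ne_zero]
  simp [degree_X_sub_C]

section Footprint

variable {σ K ι : Type*} [Field K] [Fintype K]

theorem MvPolynomial.exists_eval_eq [Finite σ] (ψ : (σ → K) → K) :
    ∃ p : MvPolynomial σ K, ∀ a, eval a p = ψ a := by
  have hψ : ψ ∈ (restrictDegree σ K (Fintype.card K - 1)).map (evalₗ K σ) := by
    rw [map_restrict_dom_evalₗ]; trivial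
  obtain ⟨p, -, hp⟩ := Submodule.mem_map.1 hψ
  exact ⟨p, congrFun hp⟩

theorem exists_standard_eval_eq [Finite σ] (m : MonomialOrder σ) {b : ι → MvPolynomial σ K}
    (hb : ∀ i, b i ≠ 0) {Z : Set (σ → K)} (hZ : ∀ a ∈ Z, ∀ i, eval a (b i) = 0)
    (ψ : (σ → K) → K) :
    ∃ r : MvPolynomial σ K, (∀ c ∈ r.support, ∀ i, ¬ m.degree (b i) ≤ c) ∧
      ∀ a ∈ Z, eval a r = ψ a := by
  obtain ⟨p, hp⟩ := exists_eval_eq ψ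
  obtain ⟨g, r, hpgr, -, hr⟩ := m.div (fun i => m.isUnit_leadingCoeff.2 (hb i)) p
  refine ⟨r, hr, fun a ha => ?_⟩
  have hcomb : eval a (Finsupp.linearCombination _ b g) = 0 := by
    simp [Finsupp.linearCombination_apply, Finsupp.sum, hZ a ha]
  rw [← hp, hpgr, map_add, hcomb, zero_add]

theorem ncard_le_card_of_standard_mem [Finite σ] (m : MonomialOrder σ)
    {b : ι → MvPolynomial σ K} (hb : ∀ i, b i ≠ 0) {Z : Set (σ → K)}
    (hZ : ∀ a ∈ Z, ∀ i, eval a (b i) = 0) (D : Finset (σ →₀ ℕ))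
    (hD : ∀ c, (∀ i, ¬ m.degree (b i) ≤ c) → c ∈ D) : Z.ncard ≤ #D := by
  classical
  let L : (D → K) → (Z → K) := fun c z => eval z.1 (∑ d : D, monomial d.1 (c d))
  have hL : Surjective L := by
    intro φ
    obtain ⟨r, hr, hrZ⟩ := exists_standard_eval_eq m hb hZ
      (fun a => if h : a ∈ Z then φ ⟨a, h⟩ else 0)
    refine ⟨fun d => r.coeff d, funext fun z => ?_⟩
    have hsum : ∑ d : D, monomial d.1 (r.coeff d) = r := by
      rw [Finset.sum_coe_sort D fun d => (monomial d (r.coeff d) : MvPolynomial σ K)]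
      conv_rhs => rw [r.as_sum]
      refine (Finset.sum_subset (fun c hc => hD c (hr c hc)) fun d _ hd => ?_).symm
      rw [notMem_support_iff.1 hd, monomial_zero]
    simp only [L, hsum, hrZ z z.2, dif_pos z.2]
  have hK : 1 < Nat.card K := by rw [Nat.card_eq_fintype_card]; exact Fintype.one_lt_card
  have hcard := Nat.card_le_card_of_surjective L hL
  rwa [Nat.card_fun, Nat.card_fun, Nat.pow_le_pow_iff_right hK, Nat.card_coe_set_eq,
    Nat.card_eq_fintype_card, Fintype.card_coe] at hcard

theorem ncard_le_card_footprint [Fintype σ] (m : MonomialOrder σ) (S : Finset K)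
    (P : ι → MvPolynomial σ K) (hP : ∀ i, P i ≠ 0) :
    {a : σ → K | (∀ j, a j ∈ S) ∧ ∀ i, eval a (P i) = 0}.ncard ≤
      Nat.card {v : σ → Fin #S // ∀ i, ¬ ∀ j, m.degree (P i) j ≤ v j} := by
  classical
  let b : ι ⊕ σ → MvPolynomial σ K := Sum.elim P fun j => ∏ c ∈ S, (X j - C c)
  have hb : ∀ k, b k ≠ 0 := by
    rintro (i | j)
    exacts [hP i, (Monic.prod fun c _ => m.monic_X_sub_C j c).ne_zero]
  have hvanish : ∀ a ∈ {a : σ → K | (∀ j, a j ∈ S) ∧ ∀ i, eval a (P i) = 0}, ∀ k,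
      eval a (b k) = 0 := by
    rintro a ⟨ha, hPa⟩ (i | j)
    · exact hPa i
    · simp [b, Finset.prod_eq_zero_iff, sub_eq_zero, ha j]
  let D : Finset (σ →₀ ℕ) :=
    (univ.filter fun v : σ → Fin #S => ∀ i, ¬ ∀ j, m.degree (P i) j ≤ v j).image
      fun v => Finsupp.equivFunOnFinite.symm fun j => (v j : ℕ)
  have hD : ∀ c, (∀ k, ¬ m.degree (b k) ≤ c) → c ∈ D := by
    intro c hc
    have hbox : ∀ j, c j < #S := fun j => by
      simpa [b, m.degree_prod_X_sub_C, Finsupp.single_le_iff] using hc (Sum.inr j)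
    refine Finset.mem_image.2 ⟨fun j => ⟨c j, hbox j⟩, ?_, by ext j; simp⟩
    simpa [b, Finsupp.le_def] using fun i => hc (Sum.inl i)
  calc _ ≤ #D := ncard_le_card_of_standard_mem m hb hvanish D hD
    _ ≤ _ := by
        rw [Nat.card_eq_fintype_card, Fintype.card_subtype]
        exact Finset.card_image_le

end Footprint

section Counting

variable {ι α : Type*}

noncomputable def density (p : (ι → α) → Prop) : ℝ :=
  Nat.card {v // p v} / Nat.card (ι → α)

theorem card_and_mul_card_eq {A B : Finset ι} (hAB : Disjoint A B) {X Y : (ι → α) → Prop}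
    (hX : DependsOn X A) (hY : DependsOn Y B) :
    Nat.card {v // X v ∧ Y v} * Nat.card (ι → α) =
      Nat.card {v // X v} * Nat.card {v // Y v} := by
  classical
  have hA : ∀ v w : ι → α, X (A.piecewise v w) = X v :=
    fun v w => hX fun j hj => by simp [Finset.piecewise_eq_of_mem _ _ _ hj]
  have hB : ∀ v w : ι → α, Y (A.piecewise v w) = Y w :=
    fun v w => hY fun j hj => by
      simp [Finset.piecewise_eq_of_notMem _ _ _ (Finset.disjoint_right.1 hAB hj)]
  rw [← Nat.card_prod, ← Nat.card_prod]
  refine Nat.card_congr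
    { toFun := fun q => (⟨A.piecewise q.1.1 q.2, (hA _ _).mpr q.1.2.1⟩,
        ⟨A.piecewise q.2 q.1.1, (hB _ _).mpr q.1.2.2⟩)
      invFun := fun q => (⟨A.piecewise q.1.1 q.2.1, (hA _ _).mpr q.1.2, (hB _ _).mpr q.2.2⟩,
        A.piecewise q.2.1 q.1.1)
      left_inv := fun q => ?_
      right_inv := fun q => ?_ } <;>
  ext j <;> by_cases hj : j ∈ A <;> simp [hj]

variable [Fintype ι] [Fintype α] [Nonempty α]

theorem card_subtype_eq_density_mul (p : (ι → α) → Prop) :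
    (Nat.card {v // p v} : ℝ) = density p * Nat.card (ι → α) := by
  have hN : (0 : ℝ) < Nat.card (ι → α) := by exact_mod_cast Nat.card_pos
  rw [density, div_mul_cancel₀ _ hN.ne']

theorem density_and {A B : Finset ι} (hAB : Disjoint A B) {X Y : (ι → α) → Prop}
    (hX : DependsOn X A) (hY : DependsOn Y B) :
    density (fun v => X v ∧ Y v) = density X * density Y := by
  have h : (Nat.card {v // X v ∧ Y v} : ℝ) * Nat.card (ι → α) =
      Nat.card {v // X v} * Nat.card {v // Y v} := by
    exact_mod_cast card_and_mul_card_eq hAB hX hY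
  have hN : (0 : ℝ) < Nat.card (ι → α) := by exact_mod_cast Nat.card_pos
  unfold density
  rw [div_mul_div_comm, div_eq_div_iff hN.ne' (by positivity), ← h]
  ring

theorem density_forall {κ : Type*} {A : κ → Finset ι} (hA : Pairwise (Disjoint on A))
    {p : κ → (ι → α) → Prop} (hp : ∀ i, DependsOn (p i) (A i)) (T : Finset κ) :
    density (fun v => ∀ i ∈ T, p i v) = ∏ i ∈ T, density (p i) := by
  classical
  induction T using Finset.induction with
  | empty => simp [density, div_self]
  | @insert a T ha IH =>
    have hT : DependsOn (fun v => ∀ i ∈ T, p i v) (T.biUnion A) := fun v w hvw =>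
      propext <| forall₂_congr fun i hi =>
        (hp i fun j hj => hvw j (Finset.mem_coe.2 (Finset.mem_biUnion.2 ⟨i, hi, hj⟩))).to_iff
    have hdisj : Disjoint (A a) (T.biUnion A) :=
      (Finset.disjoint_biUnion_right _ _ _).2 fun i hi => hA fun h => ha (h ▸ hi)
    simp only [Finset.forall_mem_insert, Finset.prod_insert ha, ← IH]
    exact density_and hdisj (hp a) hT

theorem density_not (X : (ι → α) → Prop) :
    density (fun v => ¬ X v) = 1 - density X := by
  classical
  have hN : (0 : ℝ) < Nat.card (ι → α) := by exact_mod_cast Nat.card_pos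
  unfold density
  rw [eq_sub_iff_add_eq, ← add_div, div_eq_one_iff_eq hN.ne']
  simp only [Nat.card_eq_fintype_card]
  exact_mod_cast Fintype.card_subtype_compl X ▸ Nat.sub_add_cancel (Fintype.card_subtype_le X)

end Counting

section Box

variable {ι : Type*} [Fintype ι] {s : ℕ}

theorem card_forall_le_eq_prod (μ : ι → ℕ) (hμ : ∀ j, μ j < s) :
    Nat.card {v : ι → Fin s // ∀ j, μ j ≤ v j} = ∏ j, (s - μ j) := by
  rw [Nat.card_congr (Equiv.subtypePiEquivPi (p := fun j (x : Fin s) => μ j ≤ x)), Nat.card_pi]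
  refine Finset.prod_congr rfl fun j _ => ?_
  change Nat.card (Set.Ici (⟨μ j, hμ j⟩ : Fin s)) = _
  rw [Nat.card_eq_fintype_card, Fintype.card_Ici, Fin.card_Ici]

variable [NeZero s]

theorem one_div_pow_card_support_le_density (μ : ι →₀ ℕ) (hμ : ∀ j, μ j < s) :
    1 / (s : ℝ) ^ #μ.support ≤ density fun v : ι → Fin s => ∀ j, μ j ≤ v j := by
  classical
  have hs : (0 : ℝ) < s := by exact_mod_cast Nat.pos_of_neZero s
  calc 1 / (s : ℝ) ^ #μ.support = ∏ j, if j ∈ μ.support then 1 / (s : ℝ) else 1 := by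
        rw [Finset.prod_ite_mem, Finset.univ_inter, Finset.prod_const, one_div_pow]
    _ ≤ ∏ j, ((s - μ j : ℕ) : ℝ) / s := by
        refine Finset.prod_le_prod (fun j _ => by positivity) fun j _ => ?_
        split_ifs with hj
        · gcongr
          exact_mod_cast Nat.one_le_iff_ne_zero.2 (Nat.sub_ne_zero_of_lt (hμ j))
        · rw [Finsupp.notMem_support_iff.1 hj, Nat.sub_zero, div_self hs.ne']
    _ = density fun v : ι → Fin s => ∀ j, μ j ≤ v j := by
        rw [density, card_forall_le_eq_prod μ hμ, Nat.card_fun, Nat.card_eq_fintype_card,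
          Nat.card_eq_fintype_card, Fintype.card_fin, Finset.prod_div_distrib, Finset.prod_const,
          Finset.card_univ]
        push_cast
        rfl

theorem density_forall_not_le_le {κ : Type*} [Fintype κ] {d : ℕ} (μ : κ → ι →₀ ℕ)
    (hdisj : Pairwise (Disjoint on fun i => (μ i).support)) (hμ : ∀ i j, μ i j < s)
    (hd : ∀ i, #(μ i).support ≤ d) :
    density (fun v : ι → Fin s => ∀ i, ¬ ∀ j, μ i j ≤ v j) ≤
      (1 - 1 / (s : ℝ) ^ d) ^ Fintype.card κ := by
  have hs : (1 : ℝ) ≤ s := by exact_mod_cast Nat.one_le_iff_ne_zero.2 (NeZero.ne s)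
  have hdep : ∀ i, DependsOn (fun v : ι → Fin s => ¬ ∀ j, μ i j ≤ v j) (μ i).support :=
    fun i v w hvw => propext <| not_congr <| forall_congr' fun j => by
      by_cases hj : j ∈ (μ i).support
      · rw [hvw j hj]
      · simp [Finsupp.notMem_support_iff.1 hj]
  have hfactor (i : κ) :
      density (fun v : ι → Fin s => ¬ ∀ j, μ i j ≤ v j) ≤ 1 - 1 / (s : ℝ) ^ d := by
    rw [density_not]
    have := one_div_pow_card_support_le_density (μ i) (hμ i)
    have : 1 / (s : ℝ) ^ d ≤ 1 / (s : ℝ) ^ #(μ i).support :=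
      one_div_le_one_div_of_le (by positivity) (pow_le_pow_right₀ hs (hd i))
    linarith
  calc density (fun v : ι → Fin s => ∀ i, ¬ ∀ j, μ i j ≤ v j)
      = ∏ i, density (fun v : ι → Fin s => ¬ ∀ j, μ i j ≤ v j) := by
        rw [← density_forall hdisj hdep]
        simp only [Finset.mem_univ, forall_const]
    _ ≤ ∏ _i : κ, (1 - 1 / (s : ℝ) ^ d) :=
        Finset.prod_le_prod (fun i _ => by unfold density; positivity) fun i _ => hfactor i
    _ = (1 - 1 / (s : ℝ) ^ d) ^ Fintype.card κ := by rw [Finset.prod_const, Finset.card_univ]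

end Box

theorem stmt9_general {F : Type*} [Field F] [Fintype F]
    {n s d t : ℕ} (hs : 2 ≤ s) (S : Finset F) (hS : S.card = s)
    (P : Fin t → MvPolynomial (Fin n) F) (hP0 : ∀ i, P i ≠ 0)
    (hdeg : ∀ i, ∀ e ∈ (P i).support, ∀ j : Fin n, e j ≤ s - 1)
    (m : Fin t → (Fin n →₀ ℕ))
    (hlm : ∀ i, m i ∈ (P i).support ∧
      ∀ e ∈ (P i).support, e ≠ m i → GrlexLT e (m i))
    (hdisj : ∀ i j, i ≠ j → Disjoint (m i).support (m j).support)
    (hvars : ∀ i, (m i).support.card ≤ d) :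
    ({a : Fin n → F | (∀ j, a j ∈ S) ∧ ∀ i, MvPolynomial.eval a (P i) = 0}.ncard : ℝ)
      ≤ (1 - 1 / (s : ℝ) ^ d) ^ t * (s : ℝ) ^ n := by
  subst hS
  have : NeZero #S := ⟨by omega⟩
  have hlead : ∀ i, degLex.degree (P i) = m i :=
    fun i => degLex_degree_eq_of_grlexLT (hlm i).1 (hlm i).2
  have hμ : ∀ i j, m i j < #S := fun i j => by have := hdeg i (m i) (hlm i).1 j; omega
  have hfoot := ncard_le_card_footprint degLex S P hP0
  simp only [hlead] at hfoot
  calc _ ≤ (Nat.card {v : Fin n → Fin #S // ∀ i, ¬ ∀ j, m i j ≤ v j} : ℝ) := by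
        exact_mod_cast hfoot
    _ = density (fun v : Fin n → Fin #S => ∀ i, ¬ ∀ j, m i j ≤ v j) * (#S : ℝ) ^ n := by
        rw [card_subtype_eq_density_mul, Nat.card_fun, Nat.card_fin, Nat.card_fin]
        push_cast
        rfl
    _ ≤ _ := by
        gcongr
        simpa using density_forall_not_le_le m hdisj hμ hvars

/-- Footprint bound: if `P₁, …, P_t` are nonzero polynomials over `𝔽_q`, of
individual degree at most `s-1` in each variable, whose graded-lex leading
monomials `m i` involve at most `d` variables each and are supported on
pairwise disjoint sets of variables, then the set of common zeros inside `S^n`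
(where `S ⊆ 𝔽_q`, `|S| = s ≥ 2`) has size at most `(1 - 1/s^d)^t · s^n`. -/
theorem stmt9 {F : Type*} [Field F] [Fintype F] [DecidableEq F]
    {n s d t : ℕ} (hs : 2 ≤ s) (S : Finset F) (hS : S.card = s)
    (P : Fin t → MvPolynomial (Fin n) F) (hP0 : ∀ i, P i ≠ 0)
    (hdeg : ∀ i, ∀ e ∈ (P i).support, ∀ j : Fin n, e j ≤ s - 1)
    (m : Fin t → (Fin n →₀ ℕ))
    (hlm : ∀ i, m i ∈ (P i).support ∧
      ∀ e ∈ (P i).support, e ≠ m i → GrlexLT e (m i))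
    (hdisj : ∀ i j, i ≠ j → Disjoint (m i).support (m j).support)
    (hvars : ∀ i, (m i).support.card ≤ d) :
    ({a : Fin n → F | (∀ j, a j ∈ S) ∧ ∀ i, MvPolynomial.eval a (P i) = 0}.ncard : ℝ)
      ≤ (1 - 1 / (s : ℝ) ^ d) ^ t * (s : ℝ) ^ n :=
  stmt9_general hs S hS P hP0 hdeg m hlm hdisj hvars
end

section
/- Let $Z_1,\dots,Z_t$ be Boolean ($\{0,1\}$-valued) random variables and $\alpha \in [0,1]$ such that for every subset $T \subseteq \{1,\dots,t\}$, $\Pr[\bigwedge_{i \in T} Z_i = 1] \le \alpha^{|T|}$. Then for every $\eta > 0$, $\Pr[\sum_{i=1}^t Z_i \ge (\alpha + \eta)t] \le e^{-c\eta^2 t}$ for some absolute constant $c > 0$. -/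
open MeasureTheory

private lemma ps_exp_aux {η α : ℝ} (hη : 0 < η) (hη1 : η ≤ 1) (hα0 : 0 ≤ α) (hα1 : α ≤ 1) :
    α ≤ Real.exp (-(η/3)) * (α + η/2) := by
  have hE : Real.exp (η/3) ≤ 3/2 := by
    have h1 : Real.exp (η/3) ≤ Real.exp (1/3) := Real.exp_le_exp.mpr (by linarith)
    have h3 : Real.exp (1/3) ^ (3:ℕ) = Real.exp 1 := by rw [← Real.exp_nat_mul]; norm_num
    have h4 : Real.exp (1/3) ^ (3:ℕ) ≤ (3/2:ℝ)^(3:ℕ) := by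
      rw [h3]; nlinarith [Real.exp_one_lt_d9]
    have := le_of_pow_le_pow_left₀ (by norm_num) (by norm_num : (0:ℝ) ≤ 3/2) h4
    linarith
  have hxe : Real.exp (η/3) - 1 ≤ (η/3) * Real.exp (η/3) := by
    have h1 := mul_le_mul_of_nonneg_right (Real.add_one_le_exp (-(η/3))) (Real.exp_pos (η/3)).le
    have h2 : Real.exp (-(η/3)) * Real.exp (η/3) = 1 := by rw [← Real.exp_add]; simp
    nlinarith
  have key : α * Real.exp (η/3) ≤ α + η/2 := by
    have h5 := mul_le_mul_of_nonneg_left hxe hα0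
    have h6 : α * Real.exp (η/3) ≤ 1 * (3/2) :=
      mul_le_mul hα1 hE (Real.exp_pos _).le zero_le_one
    nlinarith [hη.le]
  have h7 := mul_le_mul_of_nonneg_left key (Real.exp_pos (-(η/3))).le
  have h2 : Real.exp (-(η/3)) * Real.exp (η/3) = 1 := by rw [← Real.exp_add]; simp
  nlinarith

/-- Panconesi–Srinivasan Chernoff-type bound: there is an absolute constant
`c > 0` such that for any Boolean random variables `Z₁, …, Z_t` (on a
probability space) satisfying `Pr[∀ i ∈ T, Zᵢ = 1] ≤ α^{|T|}` for every
`T ⊆ [t]`, and any `η > 0`,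
`Pr[∑ Zᵢ ≥ (α + η)·t] ≤ exp(-c·η²·t)`. -/
theorem stmt10 :
    ∃ c : ℝ, 0 < c ∧
      ∀ (Ω : Type) [MeasurableSpace Ω] (μ : Measure Ω) [IsProbabilityMeasure μ]
        (t : ℕ) (Z : Fin t → Ω → Bool), (∀ i, Measurable (Z i)) →
        ∀ (α η : ℝ), 0 ≤ α → α ≤ 1 → 0 < η →
        (∀ T : Finset (Fin t),
          μ {ω | ∀ i ∈ T, Z i ω = true} ≤ ENNReal.ofReal (α ^ T.card)) →
        μ {ω | (α + η) * t ≤ ∑ i, (if Z i ω then (1 : ℝ) else 0)} ≤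
          ENNReal.ofReal (Real.exp (-(c * η ^ 2 * t))) := by
  refine ⟨1/6, by norm_num, ?_⟩
  intro Ω _ μ _ t Z hZ α η hα0 hα1 hη hT
  set A : Set Ω := {ω | (α + η) * t ≤ ∑ i, (if Z i ω then (1 : ℝ) else 0)} with hA
  have hsum : ∀ ω, (∑ i, (if Z i ω then (1 : ℝ) else 0))
      = ((Finset.univ.filter (fun i => Z i ω = true)).card : ℝ) := by
    intro ω
    rw [Finset.sum_boole]
  rcases Nat.eq_zero_or_pos t with ht0 | ht0
  · subst ht0
    calc μ A ≤ 1 := prob_le_one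
      _ = ENNReal.ofReal (Real.exp (-(1/6 * η ^ 2 * ((0:ℕ):ℝ)))) := by norm_num
  have htR : (0:ℝ) < t := by exact_mod_cast ht0
  by_cases hη1 : 1 < η
  · -- the event is empty
    have hempty : A = ∅ := by
      ext ω
      simp only [Set.mem_empty_iff_false, iff_false, hA, Set.mem_setOf_eq, not_le]
      have hcard : ((Finset.univ.filter (fun i => Z i ω = true)).card : ℝ) ≤ t := by
        have h1 : (Finset.univ.filter (fun i => Z i ω = true)).card ≤ t :=
          le_trans (Finset.card_filter_le _ _) (by simp)
        exact_mod_cast h1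
      rw [hsum ω]
      nlinarith
    rw [hempty]
    simp
  push_neg at hη1
  -- main case : 0 < η ≤ 1, t ≥ 1
  set s := ⌈η * t / 2⌉₊ with hs_def
  set k := ⌈(α + η) * t⌉₊ with hk_def
  have hs_pos : 0 < s := Nat.ceil_pos.mpr (by positivity)
  have hsk : s ≤ k := Nat.ceil_le_ceil (by nlinarith)
  have hkR : (α + η) * t ≤ (k:ℝ) := Nat.le_ceil _
  have hs_up : (s:ℝ) ≤ η * t / 2 + 1 := (Nat.ceil_lt_add_one (by positivity)).le
  have hs_lo : η * t / 2 ≤ (s:ℝ) := Nat.le_ceil _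
  have hEmeas : ∀ T : Finset (Fin t), MeasurableSet {ω | ∀ i ∈ T, Z i ω = true} := by
    intro T
    have hrw : {ω | ∀ i ∈ T, Z i ω = true} = ⋂ i ∈ (T : Set (Fin t)), Z i ⁻¹' {true} := by
      ext ω; simp
    rw [hrw]
    exact MeasurableSet.biInter T.countable_toSet
      (fun i _ => hZ i (measurableSet_singleton true))
  have hAmeas : MeasurableSet A := by
    have hf : Measurable fun ω => ∑ i, (if Z i ω then (1:ℝ) else 0) := by
      apply Finset.measurable_sum
      intro i _
      exact Measurable.ite (hZ i (measurableSet_singleton true))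
        measurable_const measurable_const
    exact measurableSet_le measurable_const hf
  set P := Finset.powersetCard s (Finset.univ : Finset (Fin t)) with hP
  set g : Ω → ENNReal :=
    fun ω => ∑ T ∈ P, ({ω' | ∀ i ∈ T, Z i ω' = true}).indicator (1 : Ω → ENNReal) ω with hg
  have hpoint : ∀ ω ∈ A, (k.choose s : ENNReal) ≤ g ω := by
    intro ω hω
    set S := Finset.univ.filter (fun i => Z i ω = true) with hS
    have hωA : (α + η) * t ≤ (S.card : ℝ) := by
      have := hω
      rw [hA, Set.mem_setOf_eq, hsum ω] at this
      exact this
    have hks : k ≤ S.card := Nat.ceil_le.mpr hωA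
    have hind : ∀ T ∈ P, ({ω' | ∀ i ∈ T, Z i ω' = true}).indicator (1 : Ω → ENNReal) ω
        = if T ⊆ S then 1 else 0 := by
      intro T _
      by_cases h : T ⊆ S
      · rw [if_pos h, Set.indicator_of_mem]
        · rfl
        · intro i hi
          have := h hi
          rw [hS, Finset.mem_filter] at this
          exact this.2
      · rw [if_neg h, Set.indicator_of_notMem]
        intro hmem
        exact h (fun i hi => by
          rw [hS, Finset.mem_filter]
          exact ⟨Finset.mem_univ i, hmem i hi⟩)
    have hfilter : P.filter (fun T => T ⊆ S) = Finset.powersetCard s S := by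
      ext T
      simp only [hP, Finset.mem_filter, Finset.mem_powersetCard]
      constructor
      · rintro ⟨⟨-, h2⟩, h3⟩; exact ⟨h3, h2⟩
      · rintro ⟨h1, h2⟩; exact ⟨⟨Finset.subset_univ T, h2⟩, h1⟩
    have hgω : g ω = ((Finset.powersetCard s S).card : ENNReal) := by
      rw [hg]
      simp only []
      rw [Finset.sum_congr rfl hind, Finset.sum_boole, hfilter]
    rw [hgω, Finset.card_powersetCard]
    exact_mod_cast Nat.choose_le_choose s hks
  have key : (k.choose s : ENNReal) * μ A ≤ (t.choose s : ENNReal) * ENNReal.ofReal (α ^ s) := by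
    calc (k.choose s : ENNReal) * μ A = ∫⁻ _ in A, (k.choose s : ENNReal) ∂μ :=
          (setLIntegral_const _ _).symm
      _ ≤ ∫⁻ ω in A, g ω ∂μ := setLIntegral_mono' hAmeas hpoint
      _ ≤ ∫⁻ ω, g ω ∂μ := setLIntegral_le_lintegral _ _
      _ = ∑ T ∈ P, μ {ω | ∀ i ∈ T, Z i ω = true} := by
          rw [hg, lintegral_finset_sum _ (fun T _ => measurable_one.indicator (hEmeas T))]
          exact Finset.sum_congr rfl fun T _ => lintegral_indicator_one (hEmeas T)
      _ ≤ ∑ T ∈ P, ENNReal.ofReal (α ^ s) := by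
          refine Finset.sum_le_sum fun T hTm => ?_
          have hcard : T.card = s := (Finset.mem_powersetCard.mp hTm).2
          have := hT T
          rwa [hcard] at this
      _ = (t.choose s : ENNReal) * ENNReal.ofReal (α ^ s) := by
          rw [Finset.sum_const, hP, Finset.card_powersetCard, Finset.card_univ,
            Fintype.card_fin, nsmul_eq_mul]
  have hreal : (t.choose s : ℝ) * α ^ s
      ≤ Real.exp (-(1/6 * η^2 * t)) * (k.choose s : ℝ) := by
    have hfac : (0:ℝ) < (Nat.factorial s : ℝ) := by positivity
    have h1 : (t.choose s : ℝ) * (Nat.factorial s : ℝ) ≤ (t:ℝ)^s := by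
      have h := Nat.descFactorial_le_pow t s
      rw [Nat.descFactorial_eq_factorial_mul_choose] at h
      have : (Nat.factorial s * t.choose s : ℝ) ≤ ((t:ℝ))^s := by exact_mod_cast h
      linarith [this]
    have h2 : ((k + 1 - s : ℕ) : ℝ)^s ≤ (k.choose s : ℝ) * (Nat.factorial s : ℝ) := by
      have h := Nat.pow_sub_le_descFactorial k s
      rw [Nat.descFactorial_eq_factorial_mul_choose] at h
      have : (((k + 1 - s : ℕ) : ℝ))^s ≤ (Nat.factorial s * k.choose s : ℝ) := by
        exact_mod_cast h
      linarith [this]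
    have h3 : (α + η/2) * t ≤ ((k + 1 - s : ℕ) : ℝ) := by
      rw [Nat.cast_sub (by omega : s ≤ k + 1)]
      push_cast
      linarith [hkR, hs_up]
    have h4 : (0:ℝ) ≤ (α + η/2) * t := by positivity
    have h5 : α ≤ Real.exp (-(η/3)) * (α + η/2) := ps_exp_aux hη hη1 hα0 hα1
    have h6 : (α * t)^s ≤ Real.exp (-(η/3))^s * ((α + η/2) * t)^s := by
      have hstep : α * t ≤ Real.exp (-(η/3)) * ((α + η/2) * t) := by
        nlinarith [h5, htR.le]
      calc (α*t)^s ≤ (Real.exp (-(η/3)) * ((α + η/2) * t))^s :=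
            pow_le_pow_left₀ (by positivity) hstep s
        _ = Real.exp (-(η/3))^s * ((α + η/2) * t)^s := mul_pow _ _ s
    have h7 : Real.exp (-(η/3))^s ≤ Real.exp (-(1/6*η^2*t)) := by
      rw [← Real.exp_nat_mul]
      apply Real.exp_le_exp.mpr
      nlinarith [hs_lo, hη.le]
    set E := Real.exp (-(1/6*η^2*t)) with hE_def
    have hEpos : (0:ℝ) < E := Real.exp_pos _
    refine le_of_mul_le_mul_right ?_ hfac
    calc (t.choose s : ℝ) * α^s * (Nat.factorial s : ℝ)
        = ((t.choose s : ℝ) * (Nat.factorial s : ℝ)) * α^s := by ring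
      _ ≤ (t:ℝ)^s * α^s := mul_le_mul_of_nonneg_right h1 (pow_nonneg hα0 s)
      _ = (α * t)^s := by rw [mul_pow]; ring
      _ ≤ Real.exp (-(η/3))^s * ((α + η/2) * t)^s := h6
      _ ≤ E * ((α + η/2) * t)^s := mul_le_mul_of_nonneg_right h7 (pow_nonneg h4 s)
      _ ≤ E * ((k + 1 - s : ℕ) : ℝ)^s :=
          mul_le_mul_of_nonneg_left (pow_le_pow_left₀ h4 h3 s) hEpos.le
      _ ≤ E * ((k.choose s : ℝ) * (Nat.factorial s : ℝ)) :=
          mul_le_mul_of_nonneg_left h2 hEpos.le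
      _ = E * (k.choose s : ℝ) * (Nat.factorial s : ℝ) := by ring
  have hENN : (t.choose s : ENNReal) * ENNReal.ofReal (α ^ s)
      ≤ ENNReal.ofReal (Real.exp (-(1/6 * η^2 * t))) * (k.choose s : ENNReal) := by
    rw [← ENNReal.ofReal_natCast (t.choose s), ← ENNReal.ofReal_natCast (k.choose s),
      ← ENNReal.ofReal_mul (Nat.cast_nonneg _), ← ENNReal.ofReal_mul (Real.exp_pos _).le]
    exact ENNReal.ofReal_le_ofReal hreal
  have hch0 : (k.choose s : ENNReal) ≠ 0 := by
    exact_mod_cast (Nat.choose_pos hsk).ne'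
  refine (ENNReal.mul_le_mul_iff_left hch0 (ENNReal.natCast_ne_top _)).mp ?_
  calc μ A * (k.choose s : ENNReal) = (k.choose s : ENNReal) * μ A := mul_comm _ _
    _ ≤ _ := key.trans hENN
end

section
/- Fix a partition $\lambda = (\lambda_1,\dots,\lambda_\ell)$ of $n$ with $\ell \le s$ and $\lambda_2 \le c$, and let $\mu = (n/s,\dots,n/s)$. For any two semi-standard Young tableaux $S, T$ of shape $\lambda$ and content $\mu$ with $S < T$ in the row-wise total order (or $S = T$ and $\sigma$ not the identity), and any column permutation $\sigma \in C_\lambda$, there exists a row index $i \in \{2,\dots,\ell\}$ such that the multiset of entries in row $i$ of $S^\sigma$ differs from the multiset of entries in row $i$ of $T$. -/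
open Finset

/-- `lam` (read on `{0, …, ℓ-1}`, 0-indexed) is a partition of `n` with exactly
`ℓ` (positive) parts. -/
def IsPartitionFn (lam : ℕ → ℕ) (ℓ n : ℕ) : Prop :=
  (∀ i j, i ≤ j → lam j ≤ lam i) ∧ (∀ i, i < ℓ → 0 < lam i) ∧
    (∀ i, ℓ ≤ i → lam i = 0) ∧ (∑ i ∈ Finset.range ℓ, lam i = n)

/-- A semi-standard Young tableau of shape `lam` (with `ℓ` rows) with entries in
`{0, …, s-1}`: rows weakly increase, columns strictly increase. -/
def IsSSYT (lam : ℕ → ℕ) (ℓ s : ℕ) (T : ℕ → ℕ → ℕ) : Prop :=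
  (∀ i j, i < ℓ → j + 1 < lam i → T i j ≤ T i (j + 1)) ∧
  (∀ i j, i + 1 < ℓ → j < lam (i + 1) → T i j < T (i + 1) j) ∧
  (∀ i j, i < ℓ → j < lam i → T i j < s)

/-- The tableau has balanced content `μ = (n/s, …, n/s)`: each value
`v < s` occurs exactly `n/s` times among the cells of the diagram. -/
def HasContentBalanced (lam : ℕ → ℕ) (ℓ s n : ℕ) (T : ℕ → ℕ → ℕ) : Prop :=
  ∀ v, v < s →
    {p : ℕ × ℕ | p.1 < ℓ ∧ p.2 < lam p.1 ∧ T p.1 p.2 = v}.ncard = n / s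

/-- The multiset of entries in row `i` of the tableau `T`. -/
def rowMultiset (lam : ℕ → ℕ) (T : ℕ → ℕ → ℕ) (i : ℕ) : Multiset ℕ :=
  (List.range (lam i)).map fun j => T i j

/-- `π` is a column permutation of the diagram of `lam`: it preserves the
column index, maps cells of the diagram to cells of the diagram, and is the
identity outside the diagram. -/
def IsColPerm (lam : ℕ → ℕ) (ℓ : ℕ) (π : ℕ × ℕ ≃ ℕ × ℕ) : Prop :=
  (∀ p : ℕ × ℕ, (π p).2 = p.2) ∧
  (∀ p : ℕ × ℕ, (p.1 < ℓ ∧ p.2 < lam p.1) → ((π p).1 < ℓ ∧ (π p).2 < lam (π p).1)) ∧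
  (∀ p : ℕ × ℕ, ¬(p.1 < ℓ ∧ p.2 < lam p.1) → π p = p)

/-- The tableau obtained from `T` by rearranging the contents of the cells
according to `π`. -/
def actTab (T : ℕ → ℕ → ℕ) (π : ℕ × ℕ ≃ ℕ × ℕ) : ℕ → ℕ → ℕ :=
  fun i j => T (π.symm (i, j)).1 (π.symm (i, j)).2

/-- The row-wise total order on tableaux of shape `lam` (0-indexed rows; the
relevant row index `i` satisfies `1 ≤ i < ℓ`, i.e. rows `2, …, ℓ` of the
paper). -/
def TabLT (lam : ℕ → ℕ) (ℓ : ℕ) (S T : ℕ → ℕ → ℕ) : Prop :=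
  ∃ i j, 1 ≤ i ∧ i < ℓ ∧ j < lam i ∧
    (∀ k, i < k → k < ℓ → ∀ j', j' < lam k → S k j' = T k j') ∧
    (∀ j', j < j' → j' < lam i → S i j' = T i j') ∧
    S i j < T i j

/-!
Suppose every row `i ≥ 1` of `S^σ` has the same multiset of entries as row `i` of `T`.
Since `σ` only moves entries within columns and columns of an SSYT strictly increase, a row
of `S^σ` can keep the entry sum of the corresponding row of `S` only if `σ` fixes it, provided
`σ` already fixes all rows below it. Descending from the bottom row, `σ` therefore fixes every
row below the lowest row in which `S` and `T` differ. If `S = T`, this covers all rows but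
the first one, so `σ` is the identity. If `S < T` is witnessed in row `i` at column `j`, every
entry of row `i` of `S^σ` is bounded by the entry of `S` in the same cell, so in row `i`
fewer entries of `S^σ` than of `T` are at least `T i j`.
-/

theorem map_val_range_ne_of_lt_of_le {L j : ℕ} {a b : ℕ → ℕ} (hj : j < L)
    (ha : ∀ x ≤ j, a x < b j) (hb : ∀ x, j ≤ x → x < L → b j ≤ b x) :
    (range L).val.map a ≠ (range L).val.map b := by
  intro h
  have hcount := congrArg (Multiset.countP (b j ≤ ·)) h
  simp only [Multiset.countP_map, ← Finset.filter_val, Finset.card_val] at hcount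
  have hle : #{x ∈ range L | b j ≤ a x} ≤ L - (j + 1) := by
    refine (card_le_card fun x hx => ?_).trans (Nat.card_Ico (j + 1) L).le
    rw [mem_filter, mem_range] at hx
    have hjx : j < x := not_le.1 fun hxj => (ha x hxj).not_ge hx.2
    exact mem_Ico.2 ⟨hjx, hx.1⟩
  have hge : L - j ≤ #{x ∈ range L | b j ≤ b x} := by
    refine (Nat.card_Ico j L).ge.trans (card_le_card fun x hx => ?_)
    rw [mem_Ico] at hx
    exact mem_filter.2 ⟨mem_range.2 hx.2, hb x hx.1 hx.2⟩
  omega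

theorem rowMultiset_eq_map (lam : ℕ → ℕ) (T : ℕ → ℕ → ℕ) (i : ℕ) :
    rowMultiset lam T i = (range (lam i)).val.map (T i) :=
  rfl

theorem rowMultiset_congr {lam : ℕ → ℕ} {A B : ℕ → ℕ → ℕ} {i : ℕ}
    (h : ∀ j < lam i, A i j = B i j) : rowMultiset lam A i = rowMultiset lam B i := by
  simp only [rowMultiset_eq_map]
  exact Multiset.map_congr rfl fun j hj => h j (mem_range.1 hj)

theorem sum_eq_of_rowMultiset_eq {lam : ℕ → ℕ} {A B : ℕ → ℕ → ℕ} {i : ℕ}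
    (h : rowMultiset lam A i = rowMultiset lam B i) :
    ∑ j ∈ range (lam i), A i j = ∑ j ∈ range (lam i), B i j :=
  congrArg Multiset.sum h

namespace IsSSYT

variable {lam : ℕ → ℕ} {ℓ s : ℕ} {T : ℕ → ℕ → ℕ}

theorem row_le (hT : IsSSYT lam ℓ s T) {i j j' : ℕ} (hi : i < ℓ) (hjj' : j ≤ j')
    (hj' : j' < lam i) : T i j ≤ T i j' := by
  induction j', hjj' using Nat.le_induction with
  | base => exact le_rfl
  | succ j' _ ih => exact (ih (by omega)).trans (hT.1 i j' hi hj')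

theorem col_lt (hT : IsSSYT lam ℓ s T) (hlam : Antitone lam) {r m j : ℕ} (hrm : r < m)
    (hm : m < ℓ) (hj : j < lam m) : T r j < T m j := by
  induction m, hrm using Nat.le_induction with
  | base => exact hT.2.1 r j hm hj
  | succ m _ ih =>
    exact (ih (by omega) (hj.trans_le (hlam m.le_succ))).trans (hT.2.1 m j hm hj)

theorem col_le (hT : IsSSYT lam ℓ s T) (hlam : Antitone lam) {r m j : ℕ} (hrm : r ≤ m)
    (hm : m < ℓ) (hj : j < lam m) : T r j ≤ T m j := by
  rcases hrm.eq_or_lt with rfl | hrm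
  · exact le_rfl
  · exact (hT.col_lt hlam hrm hm hj).le

end IsSSYT

def FixesRowsFrom (π : ℕ × ℕ ≃ ℕ × ℕ) (k : ℕ) : Prop :=
  ∀ p : ℕ × ℕ, k ≤ p.1 → π p = p

theorem FixesRowsFrom.symm_fst_le {π : ℕ × ℕ ≃ ℕ × ℕ} {k : ℕ} (h : FixesRowsFrom π (k + 1))
    (j : ℕ) : (π.symm (k, j)).1 ≤ k := by
  by_contra! hk
  have hfix := h _ hk
  rw [Equiv.apply_symm_apply] at hfix
  rw [← hfix] at hk
  exact (Nat.lt_succ_self k).not_ge hk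

namespace IsColPerm

variable {lam : ℕ → ℕ} {ℓ s : ℕ} {T : ℕ → ℕ → ℕ} {π : ℕ × ℕ ≃ ℕ × ℕ}

theorem symm_snd (hπ : IsColPerm lam ℓ π) (p : ℕ × ℕ) : (π.symm p).2 = p.2 := by
  simpa using (hπ.1 (π.symm p)).symm

theorem actTab_apply (hπ : IsColPerm lam ℓ π) (i j : ℕ) :
    actTab T π i j = T (π.symm (i, j)).1 j := by
  rw [actTab, hπ.symm_snd]

theorem actTab_le (hπ : IsColPerm lam ℓ π) (hT : IsSSYT lam ℓ s T) (hlam : Antitone lam)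
    {k j : ℕ} (h : FixesRowsFrom π (k + 1)) (hk : k < ℓ) (hj : j < lam k) :
    actTab T π k j ≤ T k j := by
  rw [hπ.actTab_apply]
  exact hT.col_le hlam (h.symm_fst_le j) hk hj

theorem eq_refl_of_fixesRowsFrom_one (hπ : IsColPerm lam ℓ π) (h : FixesRowsFrom π 1) :
    π = Equiv.refl _ := by
  refine Equiv.ext fun ⟨m, j⟩ => ?_
  rcases m with _ | m
  · have hsymm : π.symm (0, j) = (0, j) := Prod.ext (Nat.le_zero.1 (h.symm_fst_le j))
      (hπ.symm_snd _)
    exact (π.symm_apply_eq.1 hsymm).symm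
  · exact h _ m.succ_pos

theorem fixesRowsFrom_of_succ (hπ : IsColPerm lam ℓ π) (hT : IsSSYT lam ℓ s T)
    (hlam : Antitone lam) {k : ℕ} (h : FixesRowsFrom π (k + 1))
    (hrow : rowMultiset lam (actTab T π) k = rowMultiset lam T k) : FixesRowsFrom π k := by
  rintro ⟨m, j⟩ (hkm : k ≤ m)
  rcases hkm.lt_or_eq with hkm | rfl
  · exact h _ hkm
  by_cases hd : k < ℓ ∧ j < lam k
  swap
  · exact hπ.2.2 _ hd
  have hfst : (π.symm (k, j)).1 = k := by
    by_contra hne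
    have hlt : actTab T π k j < T k j := by
      rw [hπ.actTab_apply]
      exact hT.col_lt hlam ((h.symm_fst_le j).lt_of_ne hne) hd.1 hd.2
    have hle : ∀ x ∈ range (lam k), actTab T π k x ≤ T k x := fun x hx =>
      hπ.actTab_le hT hlam h hd.1 (mem_range.1 hx)
    exact (sum_lt_sum hle ⟨j, mem_range.2 hd.2, hlt⟩).ne (sum_eq_of_rowMultiset_eq hrow)
  exact (π.symm_apply_eq.1 (Prod.ext hfst (hπ.symm_snd _))).symm

theorem fixesRowsFrom_of_rowMultiset_eq (hπ : IsColPerm lam ℓ π) (hT : IsSSYT lam ℓ s T)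
    (hlam : Antitone lam) {k : ℕ}
    (hrows : ∀ m, k ≤ m → m < ℓ → rowMultiset lam (actTab T π) m = rowMultiset lam T m) :
    FixesRowsFrom π k := by
  induction hd : ℓ - k generalizing k with
  | zero => exact fun p hp => hπ.2.2 p (by omega)
  | succ d ih =>
    have hnext : FixesRowsFrom π (k + 1) := ih (fun m hm => hrows m (by omega)) (by omega)
    exact hπ.fixesRowsFrom_of_succ hT hlam hnext (hrows k le_rfl (by omega))

theorem rowMultiset_actTab_ne {S : ℕ → ℕ → ℕ} (hπ : IsColPerm lam ℓ π)
    (hS : IsSSYT lam ℓ s S) (hT : IsSSYT lam ℓ s T) (hlam : Antitone lam) {i j : ℕ}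
    (h : FixesRowsFrom π (i + 1)) (hi : i < ℓ) (hj : j < lam i) (hST : S i j < T i j) :
    rowMultiset lam (actTab S π) i ≠ rowMultiset lam T i := by
  simp only [rowMultiset_eq_map]
  refine map_val_range_ne_of_lt_of_le hj (fun x hxj => ?_) fun x hjx hx => hT.row_le hi hjx hx
  calc actTab S π i x ≤ S i x := hπ.actTab_le hS hlam h hi (by omega)
    _ ≤ S i j := hS.row_le hi hxj hj
    _ < T i j := hST

end IsColPerm

theorem stmt11_general (s n ℓ : ℕ) (lam : ℕ → ℕ)
    (hlam : IsPartitionFn lam ℓ n)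
    (S T : ℕ → ℕ → ℕ)
    (hS : IsSSYT lam ℓ s S) (hT : IsSSYT lam ℓ s T)
    (π : ℕ × ℕ ≃ ℕ × ℕ) (hπ : IsColPerm lam ℓ π)
    (hord : TabLT lam ℓ S T ∨
      ((∀ i j, i < ℓ → j < lam i → S i j = T i j) ∧ π ≠ Equiv.refl (ℕ × ℕ))) :
    ∃ i, 1 ≤ i ∧ i < ℓ ∧ rowMultiset lam (actTab S π) i ≠ rowMultiset lam T i := by
  by_contra! hrows
  have hanti : Antitone lam := fun _ _ => hlam.1 _ _
  rcases hord with ⟨i, j, hi, hiℓ, hj, habove, -, hST⟩ | ⟨hST, hπne⟩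
  · have hfix : FixesRowsFrom π (i + 1) :=
      hπ.fixesRowsFrom_of_rowMultiset_eq hS hanti fun m hm hmℓ => by
        rw [hrows m (by omega) hmℓ]
        exact rowMultiset_congr fun j' hj' => (habove m hm hmℓ j' hj').symm
    exact hπ.rowMultiset_actTab_ne hS hT hanti hfix hiℓ hj hST (hrows i hi hiℓ)
  · have hfix : FixesRowsFrom π 1 :=
      hπ.fixesRowsFrom_of_rowMultiset_eq hS hanti fun m hm hmℓ => by
        rw [hrows m hm hmℓ]
        exact rowMultiset_congr fun j' hj' => (hST m j' hmℓ hj').symm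
    exact hπne (hπ.eq_refl_of_fixesRowsFrom_one hfix)

/-- Claim on SSYTs: if `S, T` are SSYT of shape `lam` (a partition of `n` with
`ℓ ≤ s` parts and `λ₂ ≤ c`) and balanced content, `σ = π ∈ C_λ` is a column
permutation, and either `S < T` in the row-wise order, or `S = T` (on the
diagram) and `π` is not the identity, then some row `i ∈ {2, …, ℓ}` of `S^σ`
and of `T` carry different multisets of entries. -/
theorem stmt11 (s c n ℓ : ℕ) (hs : 0 < s) (hsn : s ∣ n) (lam : ℕ → ℕ)
    (hlam : IsPartitionFn lam ℓ n) (hℓ : ℓ ≤ s) (hc : lam 1 ≤ c)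
    (S T : ℕ → ℕ → ℕ)
    (hS : IsSSYT lam ℓ s S) (hT : IsSSYT lam ℓ s T)
    (hSc : HasContentBalanced lam ℓ s n S) (hTc : HasContentBalanced lam ℓ s n T)
    (π : ℕ × ℕ ≃ ℕ × ℕ) (hπ : IsColPerm lam ℓ π)
    (hord : TabLT lam ℓ S T ∨
      ((∀ i j, i < ℓ → j < lam i → S i j = T i j) ∧ π ≠ Equiv.refl (ℕ × ℕ))) :
    ∃ i, 1 ≤ i ∧ i < ℓ ∧ rowMultiset lam (actTab S π) i ≠ rowMultiset lam T i :=
  stmt11_general s n ℓ lam hlam S T hS hT π hπ hord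
end

section
/- For every positive integer $d$ and $\varepsilon \in (0, 2^{-d})$, and for every function $f : \{0,1\}^n \to G$ ($G$ an Abelian group), if $P_1,\dots,P_t$ are distinct $d$-junta-sums over $\{0,1\}^n$ depending on pairwise disjoint sets of variables, each satisfying $\delta(f, P_i) \le 2^{-d} - \varepsilon$ (fractional Hamming distance under the uniform distribution), then $t \le C(\varepsilon, d)$ for some bound depending only on $\varepsilon$ and $d$ (independent of $n$ and $G$). Concretely, $t \le O(\varepsilon^{-2}\log(1/\varepsilon))$ suffices. More precisely: with probability at least $\varepsilon/2$ over uniform $\mathbf{x}$, at least a $(1 - 2^{-d} + \varepsilon/2)$ fraction of the indices $i$ satisfy $P_i(\mathbf{x}) = f(\mathbf{x})$; on the other hand, since distinct junta-sums agree with probability at most $1 - 2^{-d}$ and values $P_j(\mathbf{x})$ for disjoint variable sets are independent, a Chernoff bound forces $t \le O(\varepsilon^{-2} \log(1/\varepsilon))$. -/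
open Finset

universe u

/-- Fractional Hamming distance between two functions on `{0,1}^n` under the
uniform distribution. -/
noncomputable def hdist {n : ℕ} {G : Type*} (f g : (Fin n → Bool) → G) : ℝ :=
  ({x : Fin n → Bool | f x ≠ g x}.ncard : ℝ) / 2 ^ n

/-!
A `d`-junta-sum is killed by every `(d+1)`-fold coordinate derivative, so the difference of two
distinct ones is a nonzero function of "degree at most `d`", and such a function is nonzero on at
least a `2^{-d}` fraction of the cube. Hence a nonconstant `Pᵢ` takes any given value with
probability at most `1 - 2^{-d}`, and since the `Pᵢ` are independent, `k` of them (at most one of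
which is constant) all coincide with probability at most `(1 - 2^{-d})^{k-1}`. Summing over
`k`-sets of indices bounds the `k`-th factorial moment of the number `X(x)` of `Pᵢ` agreeing with
`f` at `x`. As `𝔼 X ≥ (1 - 2^{-d} + ε) t`, Jensen's inequality gives
`(1 - 2^{-d} + 3ε/4)^k ≤ (1 - 2^{-d})^{k-1}` whenever `k ≤ εt/4 + 1`, and Bernoulli's
inequality then forces `t = O(ε⁻²)`.
-/

open scoped Classical

section CubeDeriv

variable {n : ℕ} {G : Type*} [AddCommGroup G]

def cubeDeriv (i : Fin n) : ((Fin n → Bool) → G) →+ ((Fin n → Bool) → G) where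
  toFun P x := P (Function.update x i true) - P (Function.update x i false)
  map_zero' := by ext; simp
  map_add' P Q := by ext; simp only [Pi.add_apply]; abel

lemma cubeDeriv_apply (i : Fin n) (P : (Fin n → Bool) → G) (x : Fin n → Bool) :
    cubeDeriv i P x = P (Function.update x i true) - P (Function.update x i false) := rfl

lemma cubeDeriv_eq_zero_iff {i : Fin n} {P : (Fin n → Bool) → G} :
    cubeDeriv i P = 0 ↔ ∀ x b, P (Function.update x i b) = P x := by
  refine ⟨fun h x b => ?_, fun h => funext fun x => by simp [cubeDeriv_apply, h]⟩
  have key := sub_eq_zero.1 (congrFun h x)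
  rw [← Function.update_eq_self i x]
  cases b <;> cases x i <;> simp [Function.update_idem, key]

lemma DependsOnlyOn.cubeDeriv_eq_zero {P : (Fin n → Bool) → G} {I : Finset (Fin n)}
    (hP : DependsOnlyOn P I) {i : Fin n} (hi : i ∉ I) : cubeDeriv i P = 0 :=
  cubeDeriv_eq_zero_iff.2 fun x b => hP _ _ fun j hj => by
    rw [Function.update_of_ne (ne_of_mem_of_not_mem hj hi)]

lemma DependsOnlyOn.cubeDeriv_erase {P : (Fin n → Bool) → G} {I : Finset (Fin n)}
    (hP : DependsOnlyOn P I) (i : Fin n) : DependsOnlyOn (cubeDeriv i P) (I.erase i) := by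
  intro x y hxy
  have h : ∀ b, P (Function.update x i b) = P (Function.update y i b) := fun b =>
    hP _ _ fun j hj => by
      rcases eq_or_ne j i with rfl | hji
      · simp
      · simp [Function.update_of_ne hji, hxy j (mem_erase.2 ⟨hji, hj⟩)]
  simp only [cubeDeriv_apply, h]

lemma DependsOnlyOn.erase_of_cubeDeriv_eq_zero {P : (Fin n → Bool) → G} {I : Finset (Fin n)}
    (hP : DependsOnlyOn P I) {i : Fin n} (hi : cubeDeriv i P = 0) :
    DependsOnlyOn P (I.erase i) := by
  intro x y hxy
  rw [← cubeDeriv_eq_zero_iff.1 hi x (y i)]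
  refine hP _ _ fun j hj => ?_
  rcases eq_or_ne j i with rfl | hji
  · simp
  · simp [Function.update_of_ne hji, hxy j (mem_erase.2 ⟨hji, hj⟩)]

lemma DependsOnlyOn.empty_of_forall_cubeDeriv_eq_zero {P : (Fin n → Bool) → G}
    {I : Finset (Fin n)} (hP : DependsOnlyOn P I) (h : ∀ i, cubeDeriv i P = 0) :
    DependsOnlyOn P ∅ := by
  induction I using Finset.induction with
  | empty => exact hP
  | insert a s ha ih => exact ih (by simpa [ha] using hP.erase_of_cubeDeriv_eq_zero (h a))

lemma apply_eq_of_forall_cubeDeriv_eq_zero {P : (Fin n → Bool) → G}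
    (h : ∀ i, cubeDeriv i P = 0) (x y : Fin n → Bool) : P x = P y :=
  (show DependsOnlyOn P univ from fun x y hxy => congrArg P (funext fun i => hxy i (mem_univ i))
    ).empty_of_forall_cubeDeriv_eq_zero h x y (by simp)

lemma card_support_cubeDeriv_le (i : Fin n) (P : (Fin n → Bool) → G) :
    #{x | cubeDeriv i P x ≠ 0} ≤ 2 * #{x | P x ≠ 0} := by
  set flip : (Fin n → Bool) → (Fin n → Bool) := fun x => Function.update x i (!x i)
  have hflip : Function.Involutive flip := fun x => by simp [flip]
  have hsub : ({x | cubeDeriv i P x ≠ 0} : Finset _) ⊆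
      ({x | P x ≠ 0} : Finset _) ∪ ({x | P (flip x) ≠ 0} : Finset _) := by
    intro x
    simp only [mem_filter, mem_univ, true_and, mem_union]
    contrapose!
    rintro ⟨hx, hfx⟩
    have hx' : P (Function.update x i (x i)) = 0 := by rwa [Function.update_eq_self]
    cases hxi : x i <;> simp_all [cubeDeriv_apply, flip]
  have hcard : #{x | P (flip x) ≠ 0} = #{x | P x ≠ 0} :=
    card_equiv (hflip.toPerm _) fun x => by simp
  calc _ ≤ _ := card_le_card hsub
    _ ≤ _ := card_union_le _ _
    _ = _ := by rw [hcard, two_mul]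

lemma card_support_eq_of_forall_cubeDeriv_eq_zero {P : (Fin n → Bool) → G}
    (h : ∀ i, cubeDeriv i P = 0) (hP : P ≠ 0) : #{x | P x ≠ 0} = 2 ^ n := by
  obtain ⟨x₀, hx₀⟩ := Function.ne_iff.1 hP
  rw [filter_true_of_mem fun x _ => by rwa [apply_eq_of_forall_cubeDeriv_eq_zero h x x₀]]
  simp

/-- Functions all of whose `d`-fold coordinate derivatives vanish. -/
def degLT : ℕ → AddSubgroup ((Fin n → Bool) → G)
  | 0 => ⊥
  | d + 1 => ⨅ i, (degLT d).comap (cubeDeriv i)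

lemma mem_degLT_succ {d : ℕ} {P : (Fin n → Bool) → G} :
    P ∈ degLT (d + 1) ↔ ∀ i, cubeDeriv i P ∈ degLT d := by
  simp [degLT, AddSubgroup.mem_iInf]

lemma DependsOnlyOn.mem_degLT {P : (Fin n → Bool) → G} {I : Finset (Fin n)}
    (hP : DependsOnlyOn P I) {d : ℕ} (hI : #I ≤ d) : P ∈ degLT (d + 1) := by
  induction d generalizing P I with
  | zero =>
    rw [mem_degLT_succ]
    intro i
    rw [hP.cubeDeriv_eq_zero (by simp_all)]
    exact zero_mem _
  | succ d ih =>
    rw [mem_degLT_succ]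
    intro i
    by_cases hi : i ∈ I
    · exact ih (hP.cubeDeriv_erase i) (by rw [card_erase_of_mem hi]; omega)
    · rw [hP.cubeDeriv_eq_zero hi]
      exact zero_mem _

lemma IsJuntaSum.mem_degLT {d : ℕ} {P : (Fin n → Bool) → G} (hP : IsJuntaSum d P) :
    P ∈ degLT (d + 1) := by
  obtain ⟨k, g, I, hg, hsum⟩ := hP
  rw [show P = ∑ j, g j from funext fun x => by simp [hsum]]
  exact sum_mem fun j _ => (hg j).2.mem_degLT (hg j).1

theorem le_card_support_of_mem_degLT {d : ℕ} {P : (Fin n → Bool) → G}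
    (hP : P ∈ degLT (d + 1)) (hP₀ : P ≠ 0) : 2 ^ n ≤ 2 ^ d * #{x | P x ≠ 0} := by
  induction d generalizing P with
  | zero =>
    have h : ∀ i, cubeDeriv i P = 0 := by simpa [mem_degLT_succ, degLT] using hP
    simp [card_support_eq_of_forall_cubeDeriv_eq_zero h hP₀]
  | succ d ih =>
    by_cases h : ∀ i, cubeDeriv i P = 0
    · rw [card_support_eq_of_forall_cubeDeriv_eq_zero h hP₀]
      exact Nat.le_mul_of_pos_left _ (by positivity)
    · push Not at h
      obtain ⟨i, hi⟩ := h
      calc 2 ^ n ≤ 2 ^ d * #{x | cubeDeriv i P x ≠ 0} := ih (mem_degLT_succ.1 hP i) hi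
        _ ≤ 2 ^ d * (2 * #{x | P x ≠ 0}) := by gcongr; exact card_support_cubeDeriv_le i P
        _ = 2 ^ (d + 1) * #{x | P x ≠ 0} := by ring

theorem IsJuntaSum.le_card_ne {d : ℕ} {P Q : (Fin n → Bool) → G} (hP : IsJuntaSum d P)
    (hQ : IsJuntaSum d Q) (hPQ : P ≠ Q) : 2 ^ n ≤ 2 ^ d * #{x | P x ≠ Q x} := by
  simpa [sub_eq_zero] using
    le_card_support_of_mem_degLT (sub_mem hP.mem_degLT hQ.mem_degLT) (sub_ne_zero.2 hPQ)

end CubeDeriv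

section CubeProb
variable {n : ℕ}

noncomputable def cubeProb (p : (Fin n → Bool) → Prop) : ℝ := ({x | p x}.ncard : ℝ) / 2 ^ n

lemma hdist_eq_cubeProb {G : Type*} (f g : (Fin n → Bool) → G) :
    hdist f g = cubeProb fun x => f x ≠ g x := rfl

lemma cubeProb_eq_card (p : (Fin n → Bool) → Prop) [DecidablePred p] :
    cubeProb p = #{x | p x} / 2 ^ n := by
  rw [cubeProb, Set.ncard_eq_toFinset_card', Set.toFinset_ofPred]

lemma cubeProb_nonneg (p : (Fin n → Bool) → Prop) : 0 ≤ cubeProb p := by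
  rw [cubeProb_eq_card]; positivity

lemma cubeProb_mono {p q : (Fin n → Bool) → Prop} (h : ∀ x, p x → q x) :
    cubeProb p ≤ cubeProb q := by
  rw [cubeProb_eq_card, cubeProb_eq_card]
  gcongr
  exact h _

lemma cubeProb_not (p : (Fin n → Bool) → Prop) :
    cubeProb (fun x => ¬ p x) = 1 - cubeProb p := by
  rw [cubeProb_eq_card, cubeProb_eq_card, eq_sub_iff_add_eq, ← add_div,
    div_eq_one_iff_eq (by positivity)]
  norm_cast
  rw [add_comm, card_filter_add_card_filter_not]
  simp

lemma cubeProb_eq_sum_fiber {β : Type*} (p : (Fin n → Bool) → Prop)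
    (g : (Fin n → Bool) → β) :
    cubeProb p = ∑ c ∈ univ.image g, cubeProb fun x => p x ∧ g x = c := by
  simp only [cubeProb_eq_card, ← sum_div]
  rw [card_eq_sum_card_fiberwise fun x _ => mem_image_of_mem g (mem_univ x)]
  simp only [filter_filter]
  push_cast
  rfl

lemma sum_cubeProb_fiber_eq_one {β : Type*} (g : (Fin n → Bool) → β) :
    ∑ c ∈ univ.image g, cubeProb (fun x => g x = c) = 1 := by
  simpa [cubeProb_eq_card] using (cubeProb_eq_sum_fiber (fun _ => True) g).symm

lemma cubeProb_and_of_disjoint {p q : (Fin n → Bool) → Prop} {I J : Finset (Fin n)}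
    (hp : DependsOnlyOn p I) (hq : DependsOnlyOn q J) (hIJ : Disjoint I J) :
    cubeProb (fun x => p x ∧ q x) = cubeProb p * cubeProb q := by
  have hpI : ∀ x y, p (I.piecewise x y) = p x := fun x y =>
    hp _ _ fun i hi => piecewise_eq_of_mem _ _ _ hi
  have hqI : ∀ x y, q (I.piecewise x y) = q y := fun x y =>
    hq _ _ fun i hi => piecewise_eq_of_notMem _ _ _ (disjoint_right.1 hIJ hi)
  -- swapping the `I`-coordinates of two points is an involution exchanging the two events
  let σ : (Fin n → Bool) × (Fin n → Bool) → (Fin n → Bool) × (Fin n → Bool) :=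
    fun z => (I.piecewise z.1 z.2, I.piecewise z.2 z.1)
  have hσ : Function.Involutive σ := fun z => by
    ext i <;> by_cases hi : i ∈ I <;> simp [σ, hi]
  have hcount : #{x | p x} * #{x | q x} = #{x | p x ∧ q x} * 2 ^ n := by
    rw [← card_product, show 2 ^ n = #(univ : Finset (Fin n → Bool)) by simp, ← card_product]
    refine card_nbij' σ σ ?_ ?_ (fun z _ => hσ z) (fun z _ => hσ z)
    · rintro ⟨x, y⟩
      simp_all [σ]
    · rintro ⟨x, y⟩
      simp_all [σ]
  have h : (#{x | p x} : ℝ) * #{x | q x} = #{x | p x ∧ q x} * 2 ^ n := by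
    exact_mod_cast hcount
  rw [cubeProb_eq_card, cubeProb_eq_card, cubeProb_eq_card, div_mul_div_comm, h]
  field_simp

lemma cubeProb_forall_mem {ι : Type*} {p : ι → (Fin n → Bool) → Prop}
    {I : ι → Finset (Fin n)} (hp : ∀ i, DependsOnlyOn (p i) (I i))
    (hI : Pairwise fun i j => Disjoint (I i) (I j))
    (S : Finset ι) : cubeProb (fun x => ∀ i ∈ S, p i x) = ∏ i ∈ S, cubeProb (p i) := by
  induction S using Finset.induction with
  | empty => simp [cubeProb_eq_card]
  | insert a s ha ih =>
    have hs : DependsOnlyOn (fun x => ∀ i ∈ s, p i x) (s.biUnion I) := fun x y hxy =>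
      propext <| forall₂_congr fun i hi =>
        (hp i x y fun j hj => hxy j (mem_biUnion.2 ⟨i, hi, hj⟩)).to_iff
    have has : Disjoint (I a) (s.biUnion I) :=
      (disjoint_biUnion_right _ _ _).2 fun i hi => hI (ne_of_mem_of_not_mem hi ha).symm
    rw [prod_insert ha, ← ih, ← cubeProb_and_of_disjoint (hp a) hs has]
    simp only [forall_mem_insert]

lemma subsingleton_const_of_hdist_lt {ι G : Type*} {f : (Fin n → Bool) → G}
    {P : ι → (Fin n → Bool) → G} (hinj : Function.Injective P)
    (hf : ∀ i, hdist f (P i) < 1 / 2) : {i | ∃ c, P i = fun _ => c}.Subsingleton := by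
  rintro i ⟨a, ha⟩ j ⟨b, hb⟩
  by_contra hij
  have hab : a ≠ b := fun h => hij (hinj (by rw [ha, hb, h]))
  have : 1 - hdist f (P i) ≤ hdist f (P j) := by
    rw [hdist_eq_cubeProb, hdist_eq_cubeProb, ha, hb, ← cubeProb_not]
    exact cubeProb_mono fun x hx h => hab (by rw [← not_not (a := f x = a).1 hx, h])
  linarith [hf i, hf j]

end CubeProb

lemma one_div_two_pow_le_one (d : ℕ) : (1 : ℝ) / 2 ^ d ≤ 1 :=
  (div_le_one (by positivity)).2 (one_le_pow₀ one_le_two)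

section JuntaFamily
variable {n : ℕ} {G : Type*} [AddCommGroup G]

lemma isJuntaSum_const (d : ℕ) (c : G) : IsJuntaSum d fun _ : Fin n → Bool => c :=
  ⟨1, fun _ _ => c, fun _ => ∅, fun _ => ⟨by simp, fun _ _ _ => rfl⟩, by simp⟩

lemma IsJuntaSum.cubeProb_eq_const_le {d : ℕ} {P : (Fin n → Bool) → G} (hP : IsJuntaSum d P)
    {c : G} (hc : P ≠ fun _ => c) : cubeProb (fun x => P x = c) ≤ 1 - 1 / 2 ^ d := by
  have hne : 1 / 2 ^ d ≤ cubeProb fun x => P x ≠ c := by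
    rw [cubeProb_eq_card, div_le_div_iff₀ (by positivity) (by positivity), one_mul, mul_comm]
    exact_mod_cast hP.le_card_ne (isJuntaSum_const d c) hc
  linarith [cubeProb_not fun x => P x = c]

variable {d t : ℕ} {P : Fin t → (Fin n → Bool) → G} {I : Fin t → Finset (Fin n)}

theorem cubeProb_forall_eq_le (hP : ∀ i, IsJuntaSum d (P i))
    (hdep : ∀ i, DependsOnlyOn (P i) (I i)) (hdisj : Pairwise fun i j => Disjoint (I i) (I j))
    {S : Finset (Fin t)} {i₀ : Fin t} (hi₀ : i₀ ∈ S)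
    (hS : ∀ i ∈ S, i ≠ i₀ → ∀ c, P i ≠ fun _ => c) :
    cubeProb (fun x => ∀ i ∈ S, P i x = P i₀ x) ≤ (1 - 1 / 2 ^ d) ^ (#S - 1) := by
  have hfiber : ∀ c, cubeProb (fun x => (∀ i ∈ S, P i x = P i₀ x) ∧ P i₀ x = c) =
      cubeProb (fun x => P i₀ x = c) * ∏ i ∈ S.erase i₀, cubeProb (fun x => P i x = c) := by
    intro c
    rw [mul_prod_erase S (fun i => cubeProb fun x => P i x = c) hi₀,
      ← cubeProb_forall_mem (p := fun i x => P i x = c)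
        (fun i x y hxy => congrArg (· = c) (hdep i x y hxy)) hdisj]
    congr! 2 with x
    exact ⟨fun ⟨h, hc⟩ i hi => (h i hi).trans hc,
      fun h => ⟨fun i hi => (h i hi).trans (h i₀ hi₀).symm, h i₀ hi₀⟩⟩
  have hprod : ∀ c, ∏ i ∈ S.erase i₀, cubeProb (fun x => P i x = c) ≤
      (1 - 1 / 2 ^ d) ^ (#S - 1) := by
    intro c
    rw [← card_erase_of_mem hi₀, ← prod_const]
    exact prod_le_prod (fun i _ => cubeProb_nonneg _) fun i hi =>
      (hP i).cubeProb_eq_const_le (hS i (mem_of_mem_erase hi) (ne_of_mem_erase hi) c)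
  calc _ = ∑ c ∈ univ.image (P i₀), cubeProb (fun x => P i₀ x = c) *
          ∏ i ∈ S.erase i₀, cubeProb (fun x => P i x = c) := by
        rw [cubeProb_eq_sum_fiber _ (P i₀)]
        exact sum_congr rfl fun c _ => hfiber c
    _ ≤ ∑ c ∈ univ.image (P i₀),
          cubeProb (fun x => P i₀ x = c) * (1 - 1 / 2 ^ d) ^ (#S - 1) :=
        sum_le_sum fun c _ => mul_le_mul_of_nonneg_left (hprod c) (cubeProb_nonneg _)
    _ = (1 - 1 / 2 ^ d) ^ (#S - 1) := by rw [← sum_mul, sum_cubeProb_fiber_eq_one, one_mul]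

end JuntaFamily

section Moments

lemma sum_choose_card_eq_sum_card_filter {α β : Type*} [Fintype β] [DecidableEq β]
    (s : Finset α) (A : α → Finset β) (k : ℕ) :
    ∑ x ∈ s, (#(A x)).choose k = ∑ S ∈ powersetCard k univ, #{x ∈ s | S ⊆ A x} := by
  have h : ∀ x, (#(A x)).choose k = #{S ∈ powersetCard k univ | S ⊆ A x} := fun x => by
    rw [← card_powersetCard]
    congr 1
    ext S
    simp [mem_powersetCard, and_comm]
  simp only [h, card_filter]
  exact sum_comm

lemma mul_pow_le_sum_descFactorial {α : Type*} (s : Finset α) (X : α → ℕ) {a : ℝ}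
    (ha : 0 ≤ a) (j : ℕ) (hX : #s * (a + j) ≤ ∑ x ∈ s, (X x : ℝ)) :
    #s * a ^ (j + 1) ≤ ∑ x ∈ s, ((X x).descFactorial (j + 1) : ℝ) := by
  rcases s.eq_empty_or_nonempty with rfl | hs
  · simp
  have hsum : #s * a ≤ ∑ x ∈ s, ((X x - j : ℕ) : ℝ) := by
    calc (#s : ℝ) * a = #s * (a + j) - #s * j := by ring
      _ ≤ ∑ x ∈ s, ((X x : ℝ) - j) := by
        rw [sum_sub_distrib, sum_const, nsmul_eq_mul]; linarith
      _ ≤ _ := sum_le_sum fun x _ => by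
        rw [sub_le_iff_le_add]; exact_mod_cast le_tsub_add
  have hs₀ : (0 : ℝ) < #s := by exact_mod_cast hs.card_pos
  calc (#s : ℝ) * a ^ (j + 1) = (#s * a) ^ (j + 1) / #s ^ j := by field_simp; ring
    _ ≤ (∑ x ∈ s, ((X x - j : ℕ) : ℝ)) ^ (j + 1) / #s ^ j := by gcongr
    _ ≤ ∑ x ∈ s, ((X x - j : ℕ) : ℝ) ^ (j + 1) := pow_sum_div_card_le_sum_pow (by simp) j
    _ ≤ _ := sum_le_sum fun x _ => by
      have h := Nat.pow_sub_le_descFactorial (X x) (j + 1)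
      rw [Nat.add_sub_add_right] at h
      exact_mod_cast h

lemma mul_le_one_of_pow_succ_le_pow {a e : ℝ} (ha : 1 / 2 ≤ a) (ha₁ : a ≤ 1) (he : 0 ≤ e)
    {j : ℕ} (h : (a + e) ^ (j + 1) ≤ a ^ j) : j * e ≤ 1 := by
  have hpow : a ^ j * (1 + e) ^ j / 2 ≤ a ^ j :=
    calc a ^ j * (1 + e) ^ j / 2 = (a * (1 + e)) ^ j * (1 / 2) := by rw [mul_pow]; ring
      _ ≤ (a + e) ^ j * (a + e) := by gcongr <;> nlinarith
      _ ≤ a ^ j := by rwa [← pow_succ]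
  have h2 : (1 + e) ^ j ≤ 2 := by
    have : 0 < a ^ j := by positivity
    nlinarith
  nlinarith [one_add_mul_le_pow (by linarith : -2 ≤ e) j]

end Moments

section Agreement
variable {n d t : ℕ} {G : Type*} {P : Fin t → (Fin n → Bool) → G}
  {I : Fin t → Finset (Fin n)}

noncomputable def agreeing (P : Fin t → (Fin n → Bool) → G) (f : (Fin n → Bool) → G)
    (x : Fin n → Bool) : Finset (Fin t) :=
  {i | P i x = f x}

lemma sum_card_agreeing (f : (Fin n → Bool) → G) :
    ∑ x, (#(agreeing P f x) : ℝ) = 2 ^ n * ∑ i, cubeProb (fun x => P i x = f x) := by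
  have h : ∑ x, #(agreeing P f x) = ∑ i, #{x | P i x = f x} := by
    simp only [agreeing, card_filter]
    exact sum_comm
  simp only [cubeProb_eq_card, ← sum_div]
  field_simp
  exact_mod_cast h

variable [AddCommGroup G]

theorem cubeProb_subset_agreeing_le (f : (Fin n → Bool) → G) (hP : ∀ i, IsJuntaSum d (P i))
    (hdep : ∀ i, DependsOnlyOn (P i) (I i)) (hdisj : Pairwise fun i j => Disjoint (I i) (I j))
    (hconst : {i | ∃ c, P i = fun _ => c}.Subsingleton) {S : Finset (Fin t)} (hS : S.Nonempty) :
    cubeProb (fun x => S ⊆ agreeing P f x) ≤ (1 - 1 / 2 ^ d) ^ (#S - 1) := by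
  obtain ⟨i₀, hi₀, hnc⟩ :
      ∃ i₀ ∈ S, ∀ i ∈ S, i ≠ i₀ → ∀ c, P i ≠ fun _ => c := by
    by_cases h : ∃ i ∈ S, ∃ c, P i = fun _ => c
    · obtain ⟨i₀, hi₀, h₀⟩ := h
      exact ⟨i₀, hi₀, fun i _ hne c hc => hne (hconst ⟨c, hc⟩ h₀)⟩
    · push Not at h
      obtain ⟨i₀, hi₀⟩ := hS
      exact ⟨i₀, hi₀, fun i hi _ => h i hi⟩
  refine (cubeProb_mono fun x hx i hi => ?_).trans (cubeProb_forall_eq_le hP hdep hdisj hi₀ hnc)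
  simp only [agreeing, subset_iff, mem_filter, mem_univ, true_and] at hx
  rw [hx hi, hx hi₀]

theorem sum_choose_card_agreeing_le (f : (Fin n → Bool) → G) (hP : ∀ i, IsJuntaSum d (P i))
    (hdep : ∀ i, DependsOnlyOn (P i) (I i)) (hdisj : Pairwise fun i j => Disjoint (I i) (I j))
    (hconst : {i | ∃ c, P i = fun _ => c}.Subsingleton) {k : ℕ} (hk : 1 ≤ k) :
    ∑ x, ((#(agreeing P f x)).choose k : ℝ) ≤
      t.choose k * (1 - 1 / 2 ^ d) ^ (k - 1) * 2 ^ n := by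
  have hS : ∀ S ∈ powersetCard k (univ : Finset (Fin t)),
      (#{x | S ⊆ agreeing P f x} : ℝ) ≤ (1 - 1 / 2 ^ d) ^ (k - 1) * 2 ^ n := by
    intro S hSk
    obtain ⟨-, rfl⟩ := mem_powersetCard.1 hSk
    have h := cubeProb_subset_agreeing_le f hP hdep hdisj hconst (card_pos.1 hk)
    rw [cubeProb_eq_card, div_le_iff₀ (by positivity)] at h
    exact h
  calc ∑ x, ((#(agreeing P f x)).choose k : ℝ)
      = ∑ S ∈ powersetCard k univ, (#{x | S ⊆ agreeing P f x} : ℝ) := by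
        have h := sum_choose_card_eq_sum_card_filter univ (agreeing P f) k
        exact_mod_cast h
    _ ≤ ∑ S ∈ powersetCard k univ, (1 - 1 / 2 ^ d) ^ (k - 1) * 2 ^ n := sum_le_sum hS
    _ = _ := by
        rw [sum_const, card_powersetCard, card_univ, Fintype.card_fin, nsmul_eq_mul]; ring

theorem sum_descFactorial_card_agreeing_le (f : (Fin n → Bool) → G)
    (hP : ∀ i, IsJuntaSum d (P i))
    (hdep : ∀ i, DependsOnlyOn (P i) (I i)) (hdisj : Pairwise fun i j => Disjoint (I i) (I j))
    (hconst : {i | ∃ c, P i = fun _ => c}.Subsingleton) {k : ℕ} (hk : 1 ≤ k) :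
    ∑ x, ((#(agreeing P f x)).descFactorial k : ℝ) ≤
      t ^ k * (1 - 1 / 2 ^ d) ^ (k - 1) * 2 ^ n := by
  have hδ : (0 : ℝ) ≤ 1 - 1 / 2 ^ d := sub_nonneg.2 (one_div_two_pow_le_one d)
  simp only [Nat.descFactorial_eq_factorial_mul_choose, Nat.cast_mul, ← mul_sum]
  calc (k.factorial : ℝ) * ∑ x, ((#(agreeing P f x)).choose k : ℝ)
      ≤ k.factorial * (t.choose k * (1 - 1 / 2 ^ d) ^ (k - 1) * 2 ^ n) := by
        gcongr; exact sum_choose_card_agreeing_le f hP hdep hdisj hconst hk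
    _ = t.descFactorial k * (1 - 1 / 2 ^ d) ^ (k - 1) * 2 ^ n := by
        rw [Nat.descFactorial_eq_factorial_mul_choose]; push_cast; ring
    _ ≤ _ := by gcongr; exact_mod_cast Nat.descFactorial_le_pow t k

theorem pow_succ_le_pow_of_agreement (f : (Fin n → Bool) → G) (hP : ∀ i, IsJuntaSum d (P i))
    (hdep : ∀ i, DependsOnlyOn (P i) (I i)) (hdisj : Pairwise fun i j => Disjoint (I i) (I j))
    (hconst : {i | ∃ c, P i = fun _ => c}.Subsingleton) {ε : ℝ} (hε : 0 ≤ ε) (ht : 0 < t)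
    (hagree : ∀ i, 1 - 1 / 2 ^ d + ε ≤ cubeProb fun x => P i x = f x) {j : ℕ}
    (hj : (j : ℝ) ≤ ε * t / 4) :
    (1 - 1 / 2 ^ d + 3 * ε / 4) ^ (j + 1) ≤ (1 - 1 / 2 ^ d) ^ j := by
  have hδ := one_div_two_pow_le_one d
  have ha : 0 ≤ (1 - 1 / 2 ^ d + 3 * ε / 4) * t := by
    apply mul_nonneg <;> [linarith; positivity]
  have hcube : (#(univ : Finset (Fin n → Bool)) : ℝ) = 2 ^ n := by simp
  have hsum : #(univ : Finset (Fin n → Bool)) * ((1 - 1 / 2 ^ d + 3 * ε / 4) * t + j) ≤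
      ∑ x, (#(agreeing P f x) : ℝ) := by
    rw [sum_card_agreeing, hcube]
    calc (2 : ℝ) ^ n * ((1 - 1 / 2 ^ d + 3 * ε / 4) * t + j)
        ≤ 2 ^ n * ∑ _i : Fin t, (1 - 1 / 2 ^ d + ε) := by
          rw [sum_const, card_univ, Fintype.card_fin, nsmul_eq_mul]
          gcongr
          linarith
      _ ≤ _ := by gcongr with i; exact hagree i
  have h := (mul_pow_le_sum_descFactorial univ _ ha j hsum).trans
    (sum_descFactorial_card_agreeing_le f hP hdep hdisj hconst (by omega))
  rw [hcube, mul_pow, add_tsub_cancel_right] at h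
  refine le_of_mul_le_mul_right ?_ (by positivity : (0 : ℝ) < t ^ (j + 1) * 2 ^ n)
  linarith

end Agreement

/-- There is an absolute constant `C > 0` such that for every `d ≥ 1`,
`0 < ε < 2^{-d}`, Abelian group `G`, function `f : {0,1}^n → G` and distinct
`d`-junta-sums `P₁, …, P_t` depending on pairwise disjoint sets of variables,
each with `δ(f, Pᵢ) ≤ 2^{-d} - ε`, one has `t ≤ C · ε⁻² · log(1/ε)`. -/
theorem stmt14 :
    ∃ C : ℝ, 0 < C ∧
      ∀ (d : ℕ), 1 ≤ d → ∀ ε : ℝ, 0 < ε → ε < 1 / 2 ^ d →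
        ∀ (n t : ℕ) (G : Type u) [AddCommGroup G]
          (f : (Fin n → Bool) → G) (P : Fin t → (Fin n → Bool) → G)
          (I : Fin t → Finset (Fin n)),
          Function.Injective P →
          (∀ i, IsJuntaSum d (P i)) →
          (∀ i, DependsOnlyOn (P i) (I i)) →
          (Pairwise fun i j => Disjoint (I i) (I j)) →
          (∀ i, hdist f (P i) ≤ 1 / 2 ^ d - ε) →
          (t : ℝ) ≤ C * (1 / ε ^ 2) * Real.log (1 / ε) := by
  refine ⟨16, by norm_num, fun d hd ε hε hεd n t G _ f P I hinj hP hdep hdisj hclose => ?_⟩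
  have hδ : (1 : ℝ) / 2 ^ d ≤ 1 / 2 := by gcongr; exact le_self_pow₀ one_le_two (by omega)
  have hlog : 1 / 2 ≤ Real.log (1 / ε) := by
    have : Real.log 2 ≤ Real.log (1 / ε) :=
      Real.log_le_log two_pos (by rw [le_div_iff₀ hε]; linarith)
    linarith [Real.log_two_gt_d9]
  suffices ht : (t : ℝ) * ε ^ 2 ≤ 8 by
    calc (t : ℝ) ≤ 16 * (1 / ε ^ 2) * (1 / 2) := by field_simp; linarith
      _ ≤ _ := by gcongr
  rcases Nat.eq_zero_or_pos t with rfl | ht₀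
  · simp
  have hconst := subsingleton_const_of_hdist_lt hinj fun i => (hclose i).trans_lt (by linarith)
  have hagree : ∀ i, 1 - 1 / 2 ^ d + ε ≤ cubeProb fun x => P i x = f x := fun i => by
    have := hclose i
    rw [hdist_eq_cubeProb] at this
    simp_rw [ne_comm (a := f _)] at this
    linarith [cubeProb_not fun x => P i x = f x]
  set j := ⌊ε * t / 4⌋₊
  have hj := pow_succ_le_pow_of_agreement f hP hdep hdisj hconst hε.le ht₀ hagree
    (Nat.floor_le (by positivity))
  have hje := mul_le_one_of_pow_succ_le_pow (by linarith)
    (by linarith [(by positivity : (0 : ℝ) < 1 / 2 ^ d)]) (by positivity) hj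
  have hlt : ε * t / 4 < j + 1 := Nat.lt_floor_add_one _
  nlinarith [mul_lt_mul_of_pos_right hlt (by positivity : (0 : ℝ) < 3 * ε / 4)]
end

section
/- Let $T$ be a finite rooted tree with levels $0$ (leaves) through $h$ (root), and let $\rho$ be a function on the vertices with $\rho(v) \ge \varepsilon > 0$ for all $v$, $\rho(\text{root}) \le 1$, and satisfying: (1) each non-leaf vertex has at most $L$ children; (2) if $u$ is the parent of $v$, then $\rho(u) \ge \rho(v)$; (3) if $u$ has two distinct children $v, w$, then $\rho(u) \ge \rho(v) + \rho(w)$. Then the number of leaves of $T$ is at most $(1/\varepsilon)^{\lceil \log_2 L \rceil}$. -/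
lemma key_ineq (ℓ : ℕ) (hl : 1 ≤ ℓ) (a b : ℝ) (hb : 0 ≤ b) (hba : b ≤ a) :
    a ^ ℓ + ((2:ℝ) ^ ℓ - 1) * b ^ ℓ ≤ (a + b) ^ ℓ := by
  induction ℓ with
  | zero => simp at hl
  | succ n ih =>
    rcases Nat.eq_zero_or_pos n with rfl | hn
    · norm_num
    · have H := ih hn
      have ha : 0 ≤ a := hb.trans hba
      have hmul : (a + b) * (a ^ n + ((2:ℝ) ^ n - 1) * b ^ n) ≤ (a + b) ^ (n+1) := by
        have := mul_le_mul_of_nonneg_left H (by positivity : (0:ℝ) ≤ a + b)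
        calc (a + b) * (a ^ n + ((2:ℝ) ^ n - 1) * b ^ n) ≤ (a+b) * (a+b)^n := this
        _ = (a+b)^(n+1) := by ring
      have h3 : a * b ^ n ≤ b * a ^ n := by
        obtain ⟨m, rfl⟩ : ∃ m, n = m + 1 := ⟨n - 1, by omega⟩
        calc a * b ^ (m+1) = (a*b) * b^m := by ring
        _ ≤ (a*b) * a^m := by
            apply mul_le_mul_of_nonneg_left (pow_le_pow_left₀ hb hba m) (by positivity)
        _ = b * a^(m+1) := by ring
      have h4 : (2:ℝ)^n * (b * b^n) ≤ (2:ℝ)^n * (a * b^n) :=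
        mul_le_mul_of_nonneg_left
          (mul_le_mul_of_nonneg_right hba (pow_nonneg hb n)) (by positivity)
      have goal' : a^n * a + ((2:ℝ)^n * 2 - 1) * (b^n * b)
          ≤ (a+b) * (a^n + ((2:ℝ)^n - 1)*b^n) := by nlinarith [h3, h4]
      calc a^(n+1) + ((2:ℝ)^(n+1) - 1) * b^(n+1)
          = a^n * a + ((2:ℝ)^n * 2 - 1) * (b^n * b) := by ring
      _ ≤ (a+b) * (a^n + ((2:ℝ)^n - 1)*b^n) := goal'
      _ ≤ (a + b) ^ (n+1) := hmul

lemma sum_pow_le {ι : Type*} [DecidableEq ι] (s : Finset ι) (f : ι → ℝ) (ℓ : ℕ) (M : ℝ)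
    (hM : 0 ≤ M)
    (hcard : s.card ≤ 2 ^ ℓ)
    (hpos : ∀ i ∈ s, 0 ≤ f i)
    (h1 : ∀ i ∈ s, f i ≤ M)
    (h2 : ∀ i ∈ s, ∀ j ∈ s, i ≠ j → f i + f j ≤ M) :
    ∑ i ∈ s, f i ^ ℓ ≤ M ^ ℓ := by
  rcases Nat.eq_zero_or_pos ℓ with rfl | hl
  · simp only [pow_zero] at hcard ⊢
    calc ∑ i ∈ s, f i ^ 0 = (s.card : ℝ) := by simp
    _ ≤ 1 := by exact_mod_cast hcard
  · rcases s.eq_empty_or_nonempty with rfl | hne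
    · simpa using pow_nonneg hM ℓ
    · obtain ⟨i0, hi0, hmax0⟩ := s.exists_max_image f hne
      rcases (s.erase i0).eq_empty_or_nonempty with he | hne'
      · have hs : s = {i0} := by
          apply Finset.eq_singleton_iff_unique_mem.2
          refine ⟨hi0, fun x hx => ?_⟩
          by_contra hxne
          exact (Finset.eq_empty_iff_forall_notMem.1 he x) (Finset.mem_erase.2 ⟨hxne, hx⟩)
        subst hs
        simp only [Finset.sum_singleton]
        exact pow_le_pow_left₀ (hpos i0 hi0) (h1 i0 hi0) ℓ
      · obtain ⟨i1, hi1, hmax1⟩ := (s.erase i0).exists_max_image f hne'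
        have hi1s : i1 ∈ s := Finset.mem_of_mem_erase hi1
        have hne01 : i1 ≠ i0 := Finset.ne_of_mem_erase hi1
        have key := key_ineq ℓ hl (f i0) (f i1) (hpos i1 hi1s) (hmax0 i1 hi1s)
        have hsum' : ∑ i ∈ s.erase i0, f i ^ ℓ ≤ (s.erase i0).card • (f i1 ^ ℓ) :=
          Finset.sum_le_card_nsmul _ _ _
            (fun i hi => pow_le_pow_left₀ (hpos i (Finset.mem_of_mem_erase hi)) (hmax1 i hi) ℓ)
        have hcard' : (s.erase i0).card ≤ 2 ^ ℓ - 1 := by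
          have := Finset.card_erase_of_mem hi0
          have h1pow : 1 ≤ 2 ^ ℓ := Nat.one_le_two_pow
          omega
        have hcR : ((s.erase i0).card : ℝ) ≤ (2:ℝ) ^ ℓ - 1 := by
          have h1pow : 1 ≤ 2 ^ ℓ := Nat.one_le_two_pow
          have : ((s.erase i0).card : ℝ) ≤ ((2 ^ ℓ - 1 : ℕ) : ℝ) := by exact_mod_cast hcard'
          calc ((s.erase i0).card : ℝ) ≤ ((2 ^ ℓ - 1 : ℕ) : ℝ) := this
          _ = (2:ℝ) ^ ℓ - 1 := by push_cast [h1pow]; ring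
        calc ∑ i ∈ s, f i ^ ℓ = f i0 ^ ℓ + ∑ i ∈ s.erase i0, f i ^ ℓ :=
              (Finset.add_sum_erase s _ hi0).symm
        _ ≤ f i0 ^ ℓ + ((2:ℝ) ^ ℓ - 1) * f i1 ^ ℓ := by
              have hf1 : 0 ≤ f i1 ^ ℓ := pow_nonneg (hpos i1 hi1s) ℓ
              have : ∑ i ∈ s.erase i0, f i ^ ℓ ≤ ((s.erase i0).card : ℝ) * f i1 ^ ℓ := by
                simpa [nsmul_eq_mul] using hsum'
              nlinarith [mul_le_mul_of_nonneg_right hcR hf1]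
        _ ≤ (f i0 + f i1) ^ ℓ := key
        _ ≤ M ^ ℓ := by
              apply pow_le_pow_left₀ _ (h2 i0 hi0 i1 hi1s hne01.symm) ℓ
              have := hpos i0 hi0; have := hpos i1 hi1s; linarith


/-- Leaf-counting for trees with a superadditive vertex weight: let `T` be a
finite rooted tree (root `r`, parent map `p`, every vertex reaching the root,
leaves exactly at level `0`), in which every vertex has at most `L ≥ 1`
children, and let `ρ` be a vertex weight with `ρ(v) ≥ ε > 0` everywhere,
`ρ(root) ≤ 1`, `ρ` monotone along parents, and `ρ(u) ≥ ρ(v) + ρ(w)` whenever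
`v ≠ w` are two children of `u`.  Then the number of leaves is at most
`(1/ε)^⌈log₂ L⌉`. -/
theorem stmt15 {V : Type*} [Fintype V] (r : V) (p : V → V) (level : V → ℕ)
    (L : ℕ) (hL : 1 ≤ L) (ε : ℝ) (hε : 0 < ε) (ρ : V → ℝ)
    (hroot : p r = r)
    (hreach : ∀ v, ∃ k, p^[k] v = r)
    (hlevel : ∀ v, v ≠ r → level (p v) = level v + 1)
    (hleaf0 : ∀ v, (∀ u, p u = v → u = v) → level v = 0)
    (hchild : ∀ v, ({u | p u = v ∧ u ≠ v} : Set V).ncard ≤ L)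
    (hρε : ∀ v, ε ≤ ρ v) (hρroot : ρ r ≤ 1)
    (hmono : ∀ v, v ≠ r → ρ v ≤ ρ (p v))
    (hadd : ∀ v w, v ≠ w → v ≠ r → w ≠ r → p v = p w → ρ v + ρ w ≤ ρ (p v)) :
    (({v : V | ∀ u, p u = v → u = v} : Set V).ncard : ℝ) ≤ (1 / ε) ^ Nat.clog 2 L := by
  classical
  set ℓ := Nat.clog 2 L with hℓdef
  -- iterate basics
  have hfix : ∀ k, p^[k] r = r := fun k => Function.iterate_fixed hroot k
  have habs : ∀ u j k, j ≤ k → p^[j] u = r → p^[k] u = r := by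
    intro u j k hjk h
    have e : p^[k] u = p^[k-j] (p^[j] u) := by
      rw [← Function.iterate_add_apply]; congr 1; omega
    rw [e, h, hfix]
  have hlvl : ∀ k u, p^[k] u ≠ r → level (p^[k] u) = level u + k := by
    intro k
    induction k with
    | zero => simp
    | succ n ih =>
      intro u hk
      have hn : p^[n] u ≠ r := fun h => hk (habs u n (n+1) (by omega) h)
      rw [Function.iterate_succ_apply', hlevel _ hn, ih u hn]
      omega
  -- children are ≠ r
  have hchne : ∀ u v, p u = v → u ≠ v → u ≠ r := by
    rintro u v hu hne rfl
    rw [hroot] at hu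
    exact hne hu
  -- leaf finsets
  let Sf : V → Finset V :=
    fun v => Finset.univ.filter (fun u => (∀ w, p w = u → w = u) ∧ ∃ k, p^[k] u = v)
  have hSf : ∀ v u, u ∈ Sf v ↔ (∀ w, p w = u → w = u) ∧ ∃ k, p^[k] u = v := by
    intro v u; simp [Sf]
  have hLpow : L ≤ 2 ^ ℓ := Nat.le_pow_clog (by norm_num) L
  -- the main induction
  have main : ∀ n v, level v = n → ((Sf v).card : ℝ) * ε ^ ℓ ≤ ρ v ^ ℓ := by
    intro n
    induction n using Nat.strong_induction_on with
    | _ n IH =>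
      intro v hv
      rcases Nat.eq_zero_or_pos n with rfl | hn
      · -- level 0 : leaf
        have hnoch : ∀ u, p u = v → u = v := by
          intro u hu
          by_contra hne
          have hur : u ≠ r := hchne u v hu hne
          have := hlevel u hur
          rw [hu, hv] at this; omega
        have hiter : ∀ k u, p^[k] u = v → u = v := by
          intro k
          induction k with
          | zero => intro u h; exact h
          | succ m ihm =>
            intro u h
            rw [Function.iterate_succ_apply'] at h
            exact ihm u (hnoch _ h)
        have hSv : Sf v = {v} := by
          ext u
          rw [hSf, Finset.mem_singleton]
          constructor
          · rintro ⟨_, k, hk⟩; exact hiter k u hk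
          · rintro rfl; exact ⟨hnoch, 0, rfl⟩
        rw [hSv, Finset.card_singleton]
        simpa using pow_le_pow_left₀ hε.le (hρε v) ℓ
      · -- level n ≥ 1 : internal vertex
        set C : Finset V := Finset.univ.filter (fun u => p u = v ∧ u ≠ v) with hCdef
        have hCmem : ∀ u, u ∈ C ↔ p u = v ∧ u ≠ v := by intro u; simp [hCdef]
        have hCr : ∀ c ∈ C, c ≠ r := fun c hc => hchne c v ((hCmem c).1 hc).1 ((hCmem c).1 hc).2
        have hClvl : ∀ c ∈ C, level c + 1 = n := by
          intro c hc
          have h1 := hlevel c (hCr c hc)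
          rw [((hCmem c).1 hc).1, hv] at h1
          omega
        have hvnotleaf : ¬ (∀ u, p u = v → u = v) := by
          intro h; have := hleaf0 v h; omega
        have hSfv : Sf v = C.biUnion Sf := by
          ext u
          simp only [Finset.mem_biUnion, hSf, hCmem]
          constructor
          · rintro ⟨hleaf, k, hk⟩
            have huv : u ≠ v := by rintro rfl; exact hvnotleaf hleaf
            have hex : ∃ k, p^[k] u = v := ⟨k, hk⟩
            have hk0 : p^[Nat.find hex] u = v := Nat.find_spec hex
            have hk0pos : 0 < Nat.find hex := by
              rcases Nat.eq_zero_or_pos (Nat.find hex) with h | h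
              · exact absurd (by rw [← hk0, h]; rfl) huv
              · exact h
            refine ⟨p^[Nat.find hex - 1] u, ⟨?_, ?_⟩, hleaf, Nat.find hex - 1, rfl⟩
            · have e : p^[Nat.find hex - 1 + 1] u = p (p^[Nat.find hex - 1] u) :=
                Function.iterate_succ_apply' p _ u
              rw [← e, show Nat.find hex - 1 + 1 = Nat.find hex by omega]
              exact hk0
            · exact fun h => Nat.find_min hex (by omega) h
          · rintro ⟨c, ⟨hc1, hc2⟩, hleaf, k, hk⟩
            exact ⟨hleaf, k + 1, by rw [Function.iterate_succ_apply', hk, hc1]⟩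
        have hkey : ∀ c1 c2 : V, c1 ≠ r → c2 ≠ r → level c1 = level c2 →
            ∀ j1 j2 u, j1 ≤ j2 → p^[j1] u = c1 → p^[j2] u = c2 → c1 = c2 := by
          intro c1 c2 h1r h2r hlev j1 j2 u hle e1 e2
          have e3 : p^[j2 - j1] c1 = c2 := by
            rw [← e1, ← Function.iterate_add_apply]
            rw [show j2 - j1 + j1 = j2 by omega]; exact e2
          have e4 := hlvl (j2 - j1) c1 (by rw [e3]; exact h2r)
          rw [e3, hlev] at e4
          have : j2 - j1 = 0 := by omega
          rw [← e3, this]; rfl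
        have hdisj : ∀ c1 ∈ C, ∀ c2 ∈ C, c1 ≠ c2 → Disjoint (Sf c1) (Sf c2) := by
          intro c1 h1 c2 h2 hne
          rw [Finset.disjoint_left]
          intro u hu1 hu2
          apply hne
          obtain ⟨_, j1, hj1⟩ := (hSf c1 u).1 hu1
          obtain ⟨_, j2, hj2⟩ := (hSf c2 u).1 hu2
          have hlev : level c1 = level c2 := by
            have := hClvl c1 h1; have := hClvl c2 h2; omega
          rcases le_total j1 j2 with h | h
          · exact hkey c1 c2 (hCr c1 h1) (hCr c2 h2) hlev j1 j2 u h hj1 hj2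
          · exact (hkey c2 c1 (hCr c2 h2) (hCr c1 h1) hlev.symm j2 j1 u h hj2 hj1).symm
        have hcard : ((Sf v).card : ℝ) = ∑ c ∈ C, ((Sf c).card : ℝ) := by
          rw [hSfv, Finset.card_biUnion hdisj]; push_cast; rfl
        have hCL : C.card ≤ L := by
          have hset : ({u | p u = v ∧ u ≠ v} : Set V) = ↑C := by
            ext u; simp [hCmem]
          have := hchild v
          rwa [hset, Set.ncard_coe_finset] at this
        rw [hcard, Finset.sum_mul]
        calc ∑ c ∈ C, ((Sf c).card : ℝ) * ε ^ ℓ ≤ ∑ c ∈ C, ρ c ^ ℓ := by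
              apply Finset.sum_le_sum
              intro c hc
              exact IH (level c) (by have := hClvl c hc; omega) c rfl
        _ ≤ ρ v ^ ℓ := by
              apply sum_pow_le C ρ ℓ (ρ v) (hε.le.trans (hρε v)) (hCL.trans hLpow)
              · exact fun c hc => hε.le.trans (hρε c)
              · intro c hc
                have h1 := hmono c (hCr c hc)
                rwa [((hCmem c).1 hc).1] at h1
              · intro c1 h1 c2 h2 hne
                have := hadd c1 c2 hne (hCr c1 h1) (hCr c2 h2)
                  (((hCmem c1).1 h1).1.trans ((hCmem c2).1 h2).1.symm)
                rwa [((hCmem c1).1 h1).1] at this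
  -- conclusion
  have hLeaf : ({v : V | ∀ u, p u = v → u = v} : Set V) = ↑(Sf r) := by
    ext u
    simp only [Set.mem_setOf_eq, Finset.mem_coe, hSf]
    exact ⟨fun h => ⟨h, hreach u⟩, fun h => h.1⟩
  rw [hLeaf, Set.ncard_coe_finset]
  have hmain := main (level r) r rfl
  have h1 : ρ r ^ ℓ ≤ 1 := pow_le_one₀ (hε.le.trans (hρε r)) hρroot
  rw [one_div, inv_pow, ← one_div, le_div_iff₀ (pow_pos hε ℓ)]
  exact hmain.trans h1
end
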